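/- arXiv:1208.0373 — 3 statements merged into one kernel-verified Lean document; each statement's English description precedes it below -/
import Mathlib

section
/- Under the stated hypotheses on V, f and w, there exists a constant C > 0, depending only on ‖V‖_{L¹}, ‖V‖_{L^{3/2}} and ‖ |y| V(y) ‖_{L^{3/2}} (all finite under the assumptions on V), such that 0 ≤ w(x) ≤ C/(1+|x|) for every x ∈ ℝ³. -/
open MeasureTheory Real Filter Topology
open scoped ENNReal NNReal

noncomputable section

abbrev E3 : Type := EuclideanSpace ℝ (Fin 3)

open Metric in
lemma lint_ball_rot (W : E3 → ℝ≥0∞) (hrad : ∀ a b : E3, ‖a‖ = ‖b‖ → W a = W b)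
    {x x' : E3} (h : ‖x‖ = ‖x'‖) (t : ℝ) :
    ∫⁻ y in ball x t, W y = ∫⁻ y in ball x' t, W y := by
  set e : E3 ≃ₗᵢ[ℝ] E3 := Submodule.reflection (ℝ ∙ (x' - x))ᗮ with he_def
  have hex : e x' = x := Submodule.reflection_sub h.symm
  have hmp : MeasurePreserving e volume volume := e.measurePreserving
  have hemb : MeasurableEmbedding e := e.toHomeomorph.measurableEmbedding
  have hpre : (⇑e) ⁻¹' (ball x t) = ball x' t := by
    ext y
    simp only [Set.mem_preimage, mem_ball]
    rw [← hex, e.dist_map]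
  calc ∫⁻ y in ball x t, W y
      = ∫⁻ y in (⇑e) ⁻¹' (ball x t), W (e y) :=
        (hmp.setLIntegral_comp_preimage_emb hemb W _).symm
    _ = ∫⁻ y in ball x' t, W y := by
        rw [hpre]
        exact lintegral_congr fun y => hrad _ _ (e.norm_map y)

open Metric in
lemma cap_bound (W : E3 → ℝ≥0∞) (hW : AEMeasurable W volume)
    (hrad : ∀ a b : E3, ‖a‖ = ‖b‖ → W a = W b)
    (x : E3) {t : ℝ} (ht : 0 < t) (hts : 2 * t ≤ ‖x‖) :
    ∫⁻ y in ball x t, W y ≤ ENNReal.ofReal (2 * t ^ 2 / ‖x‖ ^ 2) * ∫⁻ y, W y := by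
  set s := ‖x‖ with hs_def
  have hs : 0 < s := lt_of_lt_of_le (by linarith) hts
  set v : ℝ≥0∞ := volume (ball (0 : E3) 1) with hv_def
  have hv0 : v ≠ 0 := (measure_ball_pos volume 0 one_pos).ne'
  have hvt : v ≠ ⊤ := measure_ball_lt_top.ne
  set N := ∫⁻ y, W y with hN_def
  set F := ∫⁻ y in ball x t, W y with hF_def
  set A : Set E3 := {y | s - t < ‖y‖ ∧ ‖y‖ < s + t} with hA_def
  have hAm : MeasurableSet A := by
    have : A = (fun y : E3 => ‖y‖) ⁻¹' Set.Ioo (s - t) (s + t) := rfl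
    rw [this]; exact measurable_norm measurableSet_Ioo
  -- ball measure in E3
  have hball : ∀ (y : E3) (r : ℝ), 0 ≤ r →
      volume (ball y r) = ENNReal.ofReal (r ^ 3) * v := by
    intro y r hr
    rw [hv_def, Measure.addHaar_ball volume y hr, finrank_euclideanSpace_fin]
  -- step a : for every point of the annulus A, F is at most the integral over the 2t-ball there
  have step_a : ∀ x' ∈ A, F ≤ ∫⁻ y in ball x' (2 * t), W y := by
    intro x' hx'
    obtain ⟨h1, h2⟩ := hx'
    set r := ‖x'‖ with hr_def
    have hr0 : 0 < r := by
      have : s - t < r := h1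
      linarith
    set x'' : E3 := (r / s) • x with hx''_def
    have hx''norm : ‖x''‖ = r := by
      rw [hx''_def, norm_smul, ← hs_def]
      rw [Real.norm_eq_abs, abs_of_pos (by positivity), div_mul_cancel₀]
      exact hs.ne'
    have hdist : dist x x'' < t := by
      rw [hx''_def, dist_eq_norm]
      have : x - (r / s) • x = (1 - r / s) • x := by
        rw [sub_smul, one_smul]
      rw [this, norm_smul, Real.norm_eq_abs, ← hs_def]
      have habs : |1 - r / s| * s = |s - r| := by
        have h4 : |1 - r / s| * |s| = |(1 - r / s) * s| := (abs_mul _ _).symm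
        rw [abs_of_pos hs] at h4
        rw [h4]
        congr 1
        field_simp
      rw [habs, abs_lt]
      constructor <;> linarith
    have hsub : ball x t ⊆ ball x'' (2 * t) := by
      intro y hy
      rw [mem_ball] at hy ⊢
      calc dist y x'' ≤ dist y x + dist x x'' := dist_triangle _ _ _
        _ < t + t := by exact add_lt_add hy hdist
        _ = 2 * t := by ring
    calc F ≤ ∫⁻ y in ball x'' (2 * t), W y := lintegral_mono_set hsub
      _ = ∫⁻ y in ball x' (2 * t), W y := lint_ball_rot W hrad (by rw [hx''norm]) _
  -- measurable representative
  set W' := hW.mk W with hW'_def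
  have hW'm : Measurable W' := hW.measurable_mk
  have hWW' : W =ᵐ[volume] W' := hW.ae_eq_mk
  have hW'N : ∫⁻ y, W' y = N := (lintegral_congr_ae hWW').symm
  -- the joint kernel
  set S : Set (E3 × E3) := {p : E3 × E3 | dist p.2 p.1 < 2 * t} with hS_def
  have hSm : MeasurableSet S := by
    have : IsOpen S := isOpen_lt (continuous_dist.comp (continuous_snd.prodMk continuous_fst))
      continuous_const
    exact this.measurableSet
  set J : E3 × E3 → ℝ≥0∞ := S.indicator (fun p => W' p.2) with hJ_def
  have hJm : Measurable J := (hW'm.comp measurable_snd).indicator hSm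
  have hJrow : ∀ x' : E3, (fun y => J (x', y)) = (ball x' (2 * t)).indicator W' := by
    intro x'
    funext y
    simp only [hJ_def, Set.indicator, hS_def, Set.mem_setOf_eq, mem_ball]
  have hJcol : ∀ y : E3, (fun x' => J (x', y)) = (ball y (2 * t)).indicator (fun _ => W' y) := by
    intro y
    funext x'
    simp only [hJ_def, Set.indicator, hS_def, Set.mem_setOf_eq, mem_ball, dist_comm]
  -- the key averaged bound
  have key : F * volume A ≤ ENNReal.ofReal ((2 * t) ^ 3) * v * N := by
    calc F * volume A = ∫⁻ _ in A, F ∂volume := (setLIntegral_const A F).symm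
      _ ≤ ∫⁻ x' in A, ∫⁻ y, J (x', y) ∂volume ∂volume := by
          apply setLIntegral_mono (Measurable.lintegral_prod_right' hJm)
          intro x' hx'
          rw [hJrow x', lintegral_indicator measurableSet_ball]
          calc F ≤ ∫⁻ y in ball x' (2 * t), W y := step_a x' hx'
            _ = ∫⁻ y in ball x' (2 * t), W' y :=
              lintegral_congr_ae (ae_restrict_of_ae hWW')
      _ = ∫⁻ y, ∫⁻ x' in A, J (x', y) ∂volume ∂volume := by
          exact lintegral_lintegral_swap hJm.aemeasurable
      _ ≤ ∫⁻ y, W' y * (ENNReal.ofReal ((2 * t) ^ 3) * v) ∂volume := by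
          apply lintegral_mono
          intro y
          simp only [hJcol y]
          rw [lintegral_indicator_const measurableSet_ball]
          gcongr
          calc (volume.restrict A) (ball y (2 * t)) = volume (ball y (2 * t) ∩ A) := by
                rw [Measure.restrict_apply measurableSet_ball]
            _ ≤ volume (ball y (2 * t)) := measure_mono Set.inter_subset_left
            _ = ENNReal.ofReal ((2 * t) ^ 3) * v := hball y (2 * t) (by linarith)
      _ = ENNReal.ofReal ((2 * t) ^ 3) * v * N := by
          rw [lintegral_mul_const' _ _ (ENNReal.mul_ne_top ENNReal.ofReal_ne_top hvt), hW'N,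
            mul_comm]
  -- lower bound for the annulus volume
  have hmuA : ENNReal.ofReal (4 * s ^ 2 * t) * v ≤ volume A := by
    have hAset : A = ball (0 : E3) (s + t) \ closedBall (0 : E3) (s - t) := by
      ext y
      simp only [hA_def, Set.mem_setOf_eq, Set.mem_diff, mem_ball_zero_iff,
        mem_closedBall_zero_iff, not_le]
      tauto
    have hsub : closedBall (0 : E3) (s - t) ⊆ ball (0 : E3) (s + t) :=
      closedBall_subset_ball (by linarith)
    have hcb : volume (closedBall (0 : E3) (s - t)) = ENNReal.ofReal ((s - t) ^ 3) * v := by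
      rw [hv_def, Measure.addHaar_closedBall volume _ (by linarith : (0:ℝ) ≤ s - t),
        finrank_euclideanSpace_fin]
    calc ENNReal.ofReal (4 * s ^ 2 * t) * v
        ≤ ENNReal.ofReal ((s + t) ^ 3 - (s - t) ^ 3) * v :=
          mul_le_mul_left (ENNReal.ofReal_le_ofReal (by nlinarith [mul_pos (mul_pos hs hs) ht, pow_pos ht 3])) v
      _ = (ENNReal.ofReal ((s + t) ^ 3) - ENNReal.ofReal ((s - t) ^ 3)) * v := by
          rw [ENNReal.ofReal_sub _ (pow_nonneg (by linarith : (0:ℝ) ≤ s - t) 3)]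
      _ = ENNReal.ofReal ((s + t) ^ 3) * v - ENNReal.ofReal ((s - t) ^ 3) * v := by
          rw [ENNReal.sub_mul (fun _ _ => hvt)]
      _ = volume (ball (0 : E3) (s + t)) - volume (closedBall (0 : E3) (s - t)) := by
          rw [hball 0 (s + t) (by linarith), hcb]
      _ ≤ volume (ball (0 : E3) (s + t) \ closedBall (0 : E3) (s - t)) := le_measure_diff
      _ = volume A := by rw [hAset]
  -- conclude
  set a : ℝ≥0∞ := ENNReal.ofReal (4 * s ^ 2 * t) * v with ha_def
  have ha0 : a ≠ 0 :=
    mul_ne_zero (ENNReal.ofReal_pos.mpr (by positivity)).ne' hv0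
  have hat : a ≠ ⊤ := ENNReal.mul_ne_top ENNReal.ofReal_ne_top hvt
  have hba : ENNReal.ofReal ((2 * t) ^ 3) * v = ENNReal.ofReal (2 * t ^ 2 / s ^ 2) * a := by
    rw [ha_def, ← mul_assoc, ← ENNReal.ofReal_mul (by positivity)]
    congr 2
    field_simp
    ring
  have : a * F ≤ a * (ENNReal.ofReal (2 * t ^ 2 / s ^ 2) * N) := by
    calc a * F ≤ volume A * F := mul_le_mul_left hmuA F
      _ = F * volume A := mul_comm _ _
      _ ≤ ENNReal.ofReal ((2 * t) ^ 3) * v * N := key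
      _ = ENNReal.ofReal (2 * t ^ 2 / s ^ 2) * a * N := by rw [hba]
      _ = a * (ENNReal.ofReal (2 * t ^ 2 / s ^ 2) * N) := by ring
  exact (ENNReal.mul_le_mul_iff_right ha0 hat).mp this

open Metric in
lemma newton_bound (W : E3 → ℝ≥0∞) (hW : AEMeasurable W volume)
    (hrad : ∀ a b : E3, ‖a‖ = ‖b‖ → W a = W b) {x : E3} (hx : x ≠ 0) :
    ∫⁻ y, W y * (ENNReal.ofReal ‖x - y‖)⁻¹ ≤ ENNReal.ofReal (16 / ‖x‖) * ∫⁻ y, W y := by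
  set s := ‖x‖ with hs_def
  have hs : 0 < s := norm_pos_iff.mpr hx
  set N := ∫⁻ y, W y with hN_def
  set g : E3 → ℝ≥0∞ := fun y => W y * (ENNReal.ofReal ‖x - y‖)⁻¹ with hg_def
  -- dyadic decomposition
  set U : ℕ → Set E3 := fun k =>
    Nat.rec {y : E3 | s / 4 < dist y x}
      (fun k _ => {y : E3 | s / 2 ^ (k + 3) < dist y x ∧ dist y x ≤ s / 2 ^ (k + 2)}) k
    with hU_def
  have hU0 : U 0 = {y : E3 | s / 4 < dist y x} := rfl
  have hUS : ∀ k, U (k + 1) = {y : E3 | s / 2 ^ (k + 3) < dist y x ∧ dist y x ≤ s / 2 ^ (k + 2)} :=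
    fun k => rfl
  have hdistm : Measurable fun y : E3 => dist y x := (continuous_id.dist continuous_const).measurable
  have hUm : ∀ k, MeasurableSet (U k) := by
    intro k
    cases k with
    | zero => exact measurableSet_lt measurable_const hdistm
    | succ k =>
        exact (measurableSet_lt measurable_const hdistm).inter
          (measurableSet_le hdistm measurable_const)
  -- coverage
  have hcov : ∀ y : E3, y ≠ x → y ∈ ⋃ k, U k := by
    intro y hy
    set d := dist y x with hd_def
    have hd : 0 < d := dist_pos.mpr hy
    by_cases hfar : s / 4 < d
    · exact Set.mem_iUnion.mpr ⟨0, hfar⟩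
    push_neg at hfar
    have hP : ∃ n : ℕ, s / 2 ^ (n + 1) < d := by
      obtain ⟨n, hn⟩ := exists_pow_lt_of_lt_one (div_pos hd hs) (by norm_num : (1:ℝ)/2 < 1)
      refine ⟨n, ?_⟩
      have h2n : ((1:ℝ)/2) ^ n = 1 / 2 ^ n := by
        rw [div_pow, one_pow]
      rw [h2n] at hn
      have h1 : s / 2 ^ n < d := by
        calc s / 2 ^ n = s * (1 / 2 ^ n) := by ring
          _ < s * (d / s) := mul_lt_mul_of_pos_left hn hs
          _ = d := by field_simp
      calc s / 2 ^ (n + 1) ≤ s / 2 ^ n := by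
            apply div_le_div_of_nonneg_left hs.le (by positivity)
            exact pow_le_pow_right₀ (by norm_num) (by omega)
        _ < d := h1
    classical
    set n₀ := Nat.find hP with hn0_def
    have hfind : s / 2 ^ (n₀ + 1) < d := Nat.find_spec hP
    have hn₀2 : 2 ≤ n₀ := by
      by_contra hcon
      push_neg at hcon
      interval_cases n₀
      · rw [hn0_def] at *
        have := hfind
        have h4 : s / 4 ≤ s / 2 := by
          apply div_le_div_of_nonneg_left hs.le (by norm_num) (by norm_num)
        norm_num at this
        linarith
      · have := hfind
        norm_num at this
        linarith
    obtain ⟨m, hm⟩ : ∃ m, n₀ = m + 2 := ⟨n₀ - 2, by omega⟩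
    have hnot : ¬ s / 2 ^ ((m + 1) + 1) < d := Nat.find_min hP (by omega)
    push_neg at hnot
    refine Set.mem_iUnion.mpr ⟨m + 1, ?_⟩
    rw [hUS m]
    constructor
    · have : m + 3 = n₀ + 1 := by omega
      rw [this]; exact hfind
    · have : (m + 1) + 1 = m + 2 := by omega
      rw [this] at hnot; exact hnot
  -- a.e. coverage
  have hsing : volume ({x} : Set E3) = 0 := by
    have h1 : ({x} : Set E3) ⊆ closedBall x 0 := by simp
    have h2 : volume (closedBall x 0) = 0 := by
      rw [Measure.addHaar_closedBall volume x le_rfl, finrank_euclideanSpace_fin]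
      simp
    exact measure_mono_null h1 h2
  have hae : ∀ᵐ y : E3, y ∈ ⋃ k, U k := by
    have hne : ∀ᵐ y : E3, y ≠ x := by
      rw [ae_iff]
      have : {y : E3 | ¬ y ≠ x} = {x} := by ext y; simp
      rw [this]; exact hsing
    filter_upwards [hne] with y hy using hcov y hy
  have hsplit : ∫⁻ y, g y = ∫⁻ y in ⋃ k, U k, g y := by
    rw [← lintegral_indicator (MeasurableSet.iUnion hUm)]
    apply lintegral_congr_ae
    filter_upwards [hae] with y hy
    rw [Set.indicator_of_mem hy]
  have h2inv : (2⁻¹ : ℝ≥0∞) = ENNReal.ofReal (1/2) := by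
    rw [one_div, ENNReal.ofReal_inv_of_pos two_pos, ENNReal.ofReal_ofNat]
  -- termwise bounds
  have hterm : ∀ k, ∫⁻ y in U k, g y ≤ (2⁻¹ : ℝ≥0∞) ^ k * (ENNReal.ofReal (8 / s) * N) := by
    intro k
    have hkerbound : ∀ (c : ℝ), 0 < c → ∀ y : E3, c < dist y x →
        g y ≤ W y * ENNReal.ofReal (1 / c) := by
      intro c hc y hcy
      have hxy : ‖x - y‖ = dist y x := by
        rw [dist_eq_norm, norm_sub_rev]
      apply mul_le_mul_right
      rw [hxy]
      calc (ENNReal.ofReal (dist y x))⁻¹ ≤ (ENNReal.ofReal c)⁻¹ := by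
            exact ENNReal.inv_le_inv.mpr (ENNReal.ofReal_le_ofReal hcy.le)
        _ = ENNReal.ofReal (1 / c) := by
            rw [one_div, ← ENNReal.ofReal_inv_of_pos hc]
    cases k with
    | zero =>
        have hle : ∫⁻ y in U 0, g y ≤ ∫⁻ y in U 0, W y * ENNReal.ofReal (1 / (s / 4)) := by
          apply lintegral_mono_ae
          filter_upwards [ae_restrict_mem (hUm 0)] with y hy
          exact hkerbound (s / 4) (by positivity) y hy
        calc ∫⁻ y in U 0, g y ≤ ∫⁻ y in U 0, W y * ENNReal.ofReal (1 / (s / 4)) := hle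
          _ = (∫⁻ y in U 0, W y) * ENNReal.ofReal (1 / (s / 4)) :=
              lintegral_mul_const' _ _ ENNReal.ofReal_ne_top
          _ ≤ N * ENNReal.ofReal (1 / (s / 4)) :=
              mul_le_mul_left (setLIntegral_le_lintegral _ _) _
          _ ≤ (2⁻¹ : ℝ≥0∞) ^ 0 * (ENNReal.ofReal (8 / s) * N) := by
              rw [pow_zero, one_mul, mul_comm]
              apply mul_le_mul_left
              apply ENNReal.ofReal_le_ofReal
              rw [one_div_div]
              exact (div_le_div_iff_of_pos_right hs).mpr (by norm_num)
    | succ k =>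
        have ht : (0:ℝ) < s / 2 ^ (k + 1) := by positivity
        have h2k : (1:ℝ) ≤ 2 ^ k := by exact_mod_cast Nat.one_le_two_pow (n := k)
        have hts : 2 * (s / 2 ^ (k + 1)) ≤ s := by
          have h1 : 2 * (s / 2 ^ (k + 1)) = s / 2 ^ k := by
            rw [pow_succ]
            field_simp
          rw [h1]
          exact div_le_self hs.le h2k
        have hcap := cap_bound W hW hrad x ht (by rw [hs_def] at hts ⊢; exact hts)
        have hsub : U (k + 1) ⊆ ball x (s / 2 ^ (k + 1)) := by
          intro y hy
          rw [hUS k] at hy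
          rw [mem_ball]
          calc dist y x ≤ s / 2 ^ (k + 2) := hy.2
            _ < s / 2 ^ (k + 1) := by
                apply div_lt_div_of_pos_left hs (by positivity)
                exact pow_lt_pow_right₀ (by norm_num) (by omega)
        have hle : ∫⁻ y in U (k+1), g y
            ≤ ∫⁻ y in U (k+1), W y * ENNReal.ofReal (1 / (s / 2 ^ (k + 3))) := by
          apply lintegral_mono_ae
          filter_upwards [ae_restrict_mem (hUm (k+1))] with y hy
          have hy' : s / 2 ^ (k + 3) < dist y x := by
            rw [hUS k] at hy; exact hy.1
          exact hkerbound _ (by positivity) y hy'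
        calc ∫⁻ y in U (k+1), g y
            ≤ ∫⁻ y in U (k+1), W y * ENNReal.ofReal (1 / (s / 2 ^ (k + 3))) := hle
          _ = (∫⁻ y in U (k+1), W y) * ENNReal.ofReal (1 / (s / 2 ^ (k + 3))) :=
              lintegral_mul_const' _ _ ENNReal.ofReal_ne_top
          _ ≤ (∫⁻ y in ball x (s / 2 ^ (k + 1)), W y) * ENNReal.ofReal (1 / (s / 2 ^ (k + 3))) :=
              mul_le_mul_left (lintegral_mono_set hsub) _
          _ ≤ (ENNReal.ofReal (2 * (s / 2 ^ (k + 1)) ^ 2 / s ^ 2) * N)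
                * ENNReal.ofReal (1 / (s / 2 ^ (k + 3))) := by
              exact mul_le_mul_left hcap _
          _ = (2⁻¹ : ℝ≥0∞) ^ (k+1) * (ENNReal.ofReal (8 / s) * N) := by
              have hreal : (2 * (s / 2 ^ (k + 1)) ^ 2 / s ^ 2) * (1 / (s / 2 ^ (k + 3)))
                  = (1/2 : ℝ) ^ (k+1) * (8 / s) := by
                have hsne : s ≠ 0 := hs.ne'
                field_simp
                rw [one_div_pow, sq, mul_assoc (2 ^ (k + 1) : ℝ), mul_one_div_cancel (by positivity)]; ring
              rw [h2inv, ← ENNReal.ofReal_pow (by norm_num)]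
              rw [mul_right_comm, ← ENNReal.ofReal_mul (by positivity), hreal,
                ENNReal.ofReal_mul (by positivity), mul_assoc]
  -- sum the series
  calc ∫⁻ y, g y = ∫⁻ y in ⋃ k, U k, g y := hsplit
    _ ≤ ∑' k, ∫⁻ y in U k, g y := lintegral_iUnion_le U g
    _ ≤ ∑' k, (2⁻¹ : ℝ≥0∞) ^ k * (ENNReal.ofReal (8 / s) * N) := ENNReal.tsum_le_tsum hterm
    _ = (∑' k : ℕ, (2⁻¹ : ℝ≥0∞) ^ k) * (ENNReal.ofReal (8 / s) * N) := ENNReal.tsum_mul_right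
    _ = 2 * (ENNReal.ofReal (8 / s) * N) := by
        rw [ENNReal.tsum_geometric, ENNReal.one_sub_inv_two, inv_inv]
    _ = ENNReal.ofReal (16 / s) * N := by
        rw [← mul_assoc]
        congr 1
        rw [show (2 : ℝ≥0∞) = ENNReal.ofReal 2 from (ENNReal.ofReal_ofNat 2).symm,
          ← ENNReal.ofReal_mul (by norm_num)]
        congr 1
        ring

/-- Let `V : ℝ³ → ℝ` be nonnegative, spherically symmetric, in
`L¹ ∩ L³((1+|x|⁶)dx)`, let `f` be measurable with `0 ≤ f ≤ 1`, and let `w = 1 - f` admit the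
Newtonian-potential representation `w(x) = (1/(8π)) ∫ V(y) f(y)/|x-y| dy`.  Then there is a
constant `C > 0`, depending only on `‖V‖_{L¹}`, `‖V‖_{L^{3/2}}` and `‖|y|V(y)‖_{L^{3/2}}`, such
that `0 ≤ w(x) ≤ C/(1+|x|)` for all `x`. -/
theorem w_nonneg_and_decay :
    ∀ n₁ n₂ n₃ : ℝ, ∃ C : ℝ, 0 < C ∧
      ∀ (V f w : E3 → ℝ),
        (∀ x, 0 ≤ V x) →
        (∀ x y : E3, ‖x‖ = ‖y‖ → V x = V y) →
        Integrable V →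
        Integrable (fun x : E3 => (1 + ‖x‖ ^ 6) * V x ^ 3) →
        Measurable f →
        (∀ x, 0 ≤ f x) →
        (∀ x, f x ≤ 1) →
        (∀ x, w x = 1 - f x) →
        (∀ x : E3, w x = (1 / (8 * π)) * ∫ y : E3, V y * f y / ‖x - y‖) →
        (∫ y : E3, V y) = n₁ →
        ((∫ y : E3, V y ^ ((3 : ℝ) / 2)) ^ ((2 : ℝ) / 3)) = n₂ →
        ((∫ y : E3, (‖y‖ * V y) ^ ((3 : ℝ) / 2)) ^ ((2 : ℝ) / 3)) = n₃ →
        ∀ x : E3, 0 ≤ w x ∧ w x ≤ C / (1 + ‖x‖) := by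
  intro n₁ n₂ n₃
  refine ⟨4 + 2 * |n₁|, by positivity, ?_⟩
  intro V f w hV0 hVrad hVint _hVL3 hfm hf0 hf1 hwf hwrep hn1 _hn2 _hn3 x
  set C : ℝ := 4 + 2 * |n₁| with hC_def
  have hC4 : (4:ℝ) ≤ C := by
    have : 0 ≤ 2 * |n₁| := by positivity
    linarith
  have hw0 : 0 ≤ w x := by rw [hwf x]; linarith [hf1 x]
  have hw1 : w x ≤ 1 := by rw [hwf x]; linarith [hf0 x]
  refine ⟨hw0, ?_⟩
  by_cases hxs : ‖x‖ ≤ 1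
  · -- small |x|
    have h1x : 0 < 1 + ‖x‖ := by positivity
    rw [le_div_iff₀ h1x]
    calc w x * (1 + ‖x‖) ≤ 1 * (1 + ‖x‖) := by
          apply mul_le_mul_of_nonneg_right hw1 h1x.le
      _ = 1 + ‖x‖ := one_mul _
      _ ≤ C := by linarith
  · -- large |x|
    push_neg at hxs
    have hs : 0 < ‖x‖ := by linarith
    have hxne : x ≠ 0 := by
      intro h; rw [h, norm_zero] at hs; exact lt_irrefl 0 hs
    have hn1nn : 0 ≤ n₁ := by rw [← hn1]; exact integral_nonneg hV0
    -- the ENNReal-valued weight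
    set W : E3 → ℝ≥0∞ := fun y => ENNReal.ofReal (V y) with hW_def
    have hWae : AEMeasurable W volume :=
      ENNReal.measurable_ofReal.comp_aemeasurable hVint.aemeasurable
    have hWrad : ∀ a b : E3, ‖a‖ = ‖b‖ → W a = W b := fun a b h => by
      simp only [hW_def, hVrad a b h]
    have hWN : ∫⁻ y, W y = ENNReal.ofReal n₁ := by
      rw [← hn1, ofReal_integral_eq_lintegral_ofReal hVint (ae_of_all _ hV0)]
    -- the integrand
    set g : E3 → ℝ := fun y => V y * f y / ‖x - y‖ with hg_def
    have hg0 : ∀ y, 0 ≤ g y := fun y => by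
      apply div_nonneg (mul_nonneg (hV0 y) (hf0 y)) (norm_nonneg _)
    have hgle : ∀ y, ENNReal.ofReal (g y) ≤ W y * (ENNReal.ofReal ‖x - y‖)⁻¹ := by
      intro y
      by_cases hxy : ‖x - y‖ = 0
      · simp only [hg_def, hxy, div_zero, ENNReal.ofReal_zero]
        exact zero_le
      · have hxy' : 0 < ‖x - y‖ := lt_of_le_of_ne (norm_nonneg _) (Ne.symm hxy)
        rw [hg_def]
        simp only
        rw [div_eq_mul_inv, ENNReal.ofReal_mul (mul_nonneg (hV0 y) (hf0 y)),
          ENNReal.ofReal_inv_of_pos hxy']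
        exact mul_le_mul_left (ENNReal.ofReal_le_ofReal
          (mul_le_of_le_one_right (hV0 y) (hf1 y))) _
    have hlint : ∫⁻ y, ENNReal.ofReal (g y) ≤ ENNReal.ofReal (16 / ‖x‖ * n₁) := by
      calc ∫⁻ y, ENNReal.ofReal (g y) ≤ ∫⁻ y, W y * (ENNReal.ofReal ‖x - y‖)⁻¹ :=
            lintegral_mono hgle
        _ ≤ ENNReal.ofReal (16 / ‖x‖) * ∫⁻ y, W y := newton_bound W hWae hWrad hxne
        _ = ENNReal.ofReal (16 / ‖x‖ * n₁) := by
            rw [hWN, ← ENNReal.ofReal_mul (by positivity)]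
    have hgsm : AEStronglyMeasurable g volume := by
      simp only [hg_def, div_eq_mul_inv]
      exact (hVint.aestronglyMeasurable.mul hfm.aestronglyMeasurable).mul
        ((continuous_const.sub continuous_id).norm.measurable.inv).aestronglyMeasurable
    have hint_eq : ∫ y, g y = (∫⁻ y, ENNReal.ofReal (g y)).toReal :=
      integral_eq_lintegral_of_nonneg_ae (ae_of_all _ hg0) hgsm
    have hbound : ∫ y, g y ≤ 16 / ‖x‖ * n₁ := by
      rw [hint_eq]
      calc (∫⁻ y, ENNReal.ofReal (g y)).toReal
          ≤ (ENNReal.ofReal (16 / ‖x‖ * n₁)).toReal :=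
            ENNReal.toReal_mono ENNReal.ofReal_ne_top hlint
        _ = 16 / ‖x‖ * n₁ := ENNReal.toReal_ofReal (by positivity)
    rw [hwrep x]
    have h1s : (0:ℝ) < 1 + ‖x‖ := by positivity
    have hw_le : (1 / (8 * π)) * ∫ y, g y ≤ (1 / (8 * π)) * (16 / ‖x‖ * n₁) :=
      mul_le_mul_of_nonneg_left hbound (by positivity)
    refine le_trans hw_le ?_
    have heq : (1 / (8 * π)) * (16 / ‖x‖ * n₁) = 16 * n₁ / (8 * π * ‖x‖) := by
      field_simp
    rw [heq, div_le_div_iff₀ (by positivity) h1s, hC_def, abs_of_nonneg hn1nn]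
    nlinarith [pi_gt_three, hn1nn, hxs, hs,
      mul_nonneg hn1nn (by linarith : (0:ℝ) ≤ ‖x‖ - 1),
      mul_nonneg (by linarith [pi_gt_three] : (0:ℝ) ≤ π - 3) hs.le,
      mul_nonneg hn1nn (mul_nonneg (by linarith [pi_gt_three] : (0:ℝ) ≤ π - 3) hs.le)]
end
end

section
/- Under the stated hypotheses, the correlation kernel k satisfies ‖k‖_{L²(ℝ³×ℝ³)} ≤ C C₀ ‖φ‖_{L²} ‖∇φ‖_{L²} for a universal constant C. -/
open MeasureTheory Real Filter Topology

noncomputable section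

def l2 (f : E3 → ℂ) : ℝ := (∫ x : E3, ‖f x‖ ^ 2) ^ ((1 : ℝ) / 2)

def l2grad (φ : E3 → ℂ) : ℝ := (∫ x : E3, ‖fderiv ℝ φ x‖ ^ 2) ^ ((1 : ℝ) / 2)

def kl2 (k : E3 → E3 → ℂ) : ℝ := (∫ p : E3 × E3, ‖k p.1 p.2‖ ^ 2) ^ ((1 : ℝ) / 2)

/-- The correlation kernel `k(x,y) = -N w(N(x-y)) φ(x) φ(y)`. -/
def corrK (N : ℝ) (w : E3 → ℝ) (φ : E3 → ℂ) : E3 → E3 → ℂ :=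
  fun x y => -(Complex.ofReal (N * w (N • (x - y)))) * φ x * φ y

open Set Metric ENNReal


theorem polar3 (F : E3 → ENNReal) (hF : Measurable F) :
    ∫⁻ x, F x = ∫⁻ ω : sphere (0:E3) 1, ∫⁻ r in Set.Ioi (0:ℝ),
      ENNReal.ofReal (r^2) * F (r • (ω : E3)) ∂volume ∂((volume : Measure E3).toSphere) := by
  set μ : Measure E3 := volume
  set T := homeomorphUnitSphereProd E3
  have hdim : Module.finrank ℝ E3 = 3 := by simp [finrank_euclideanSpace]
  set g : sphere (0:E3) 1 × Set.Ioi (0:ℝ) → ENNReal :=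
    fun p => F ((p.2 : ℝ) • (p.1 : E3)) with hg
  have hgm : Measurable g := by
    apply hF.comp
    fun_prop
  have h0 : ∫⁻ x, F x ∂μ = ∫⁻ x in ({0}ᶜ : Set E3), F x ∂μ := by
    rw [MeasureTheory.restrict_compl_singleton]
  have h1 : ∫⁻ x in ({0}ᶜ : Set E3), F x ∂μ
      = ∫⁻ x : ({0}ᶜ : Set E3), F x.1 ∂(μ.comap Subtype.val) := by
    rw [lintegral_subtype_comap (measurableSet_singleton (0:E3)).compl]
  have h2 : ∫⁻ x : ({0}ᶜ : Set E3), g (T x) ∂(μ.comap Subtype.val)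
      = ∫⁻ p, g p ∂(μ.toSphere.prod (Measure.volumeIoiPow (Module.finrank ℝ E3 - 1))) :=
    (μ.measurePreserving_homeomorphUnitSphereProd).lintegral_comp hgm
  have h3 : ∀ x : ({0}ᶜ : Set E3), g (T x) = F x.1 := by
    intro x
    have := T.left_inv x
    simp only [hg]
    rw [show ((T x).2 : ℝ) • ((T x).1 : E3) = ((T.symm (T x) : ({0}ᶜ : Set E3)) : E3) from rfl,
      T.symm_apply_apply]
  rw [h0, h1, ← funext h3, h2]
  rw [lintegral_prod _ hgm.aemeasurable]
  congr 1
  ext ω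
  rw [show Module.finrank ℝ E3 - 1 = 2 by omega]
  rw [Measure.volumeIoiPow,
    lintegral_withDensity_eq_lintegral_mul _ (f := fun r : Set.Ioi (0:ℝ) => ENNReal.ofReal ((r:ℝ) ^ 2))
      (by fun_prop) (g := fun y => g (ω, y)) (hgm.comp (measurable_const.prodMk measurable_id))]
  rw [← lintegral_subtype_comap measurableSet_Ioi
    (fun r : ℝ => ENNReal.ofReal (r ^ 2) * F (r • (ω : E3)))]
  rfl



theorem oneD (u : ℝ → ℂ) (hu : Differentiable ℝ u)
    (hG : ∫⁻ r in Ioi (0:ℝ), ENNReal.ofReal (r^2 * ‖u r‖^2) ≠ ⊤) :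
    ∫⁻ r in Ioi (0:ℝ), ENNReal.ofReal (‖u r‖^2)
      ≤ 4 * ∫⁻ r in Ioi (0:ℝ), ENNReal.ofReal (r^2 * ‖deriv u r‖^2) := by
  classical
  set d : ℝ → ℂ := deriv u with hd
  set D : ℝ≥0∞ := ∫⁻ r in Ioi (0:ℝ), ENNReal.ofReal (r^2 * ‖d r‖^2) with hD
  by_cases hDtop : D = ⊤
  · rw [hDtop]; simp
  set v : ℝ → ℝ := fun r => ‖u r‖^2 with hv
  have hcont : Continuous u := hu.continuous
  have hvcont : Continuous v := by fun_prop
  have hdm : Measurable d := measurable_deriv u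
  have hwm : Measurable fun r : ℝ => r^2 * ‖d r‖^2 := by fun_prop
  -- the derivative of v
  set g : ℝ → ℝ := fun r => 2*((u r).re * (d r).re + (u r).im * (d r).im) with hg
  have hnorm2 : ∀ z : ℂ, ‖z‖^2 = z.re * z.re + z.im * z.im := by
    intro z
    rw [Complex.sq_norm, Complex.normSq_apply]
  have hvderiv : ∀ r, HasDerivAt v (g r) r := by
    intro r
    have hud : HasDerivAt u (d r) r := (hu r).hasDerivAt
    have hre : HasDerivAt (fun r => (u r).re) ((d r).re) r :=
      Complex.reCLM.hasFDerivAt.comp_hasDerivAt r hud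
    have him : HasDerivAt (fun r => (u r).im) ((d r).im) r :=
      Complex.imCLM.hasFDerivAt.comp_hasDerivAt r hud
    have h5 : HasDerivAt (fun r => (u r).re * (u r).re + (u r).im * (u r).im)
        ((d r).re * (u r).re + (u r).re * (d r).re
          + ((d r).im * (u r).im + (u r).im * (d r).im)) r := (hre.mul hre).add (him.mul him)
    have heq : v = fun r => (u r).re * (u r).re + (u r).im * (u r).im :=
      funext fun r => hnorm2 (u r)
    rw [heq]
    convert h5 using 1
    simp only [hg]; ring
  have hgbound : ∀ r : ℝ, |g r| ≤ 2 * (‖u r‖ * ‖d r‖) := by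
    intro r
    have h1 : ((u r).re * (d r).re + (u r).im * (d r).im)^2 ≤ (‖u r‖ * ‖d r‖)^2 := by
      have e1 := hnorm2 (u r)
      have e2 := hnorm2 (d r)
      have h3 : (‖u r‖ * ‖d r‖)^2 = ‖u r‖^2 * ‖d r‖^2 := by ring
      nlinarith [sq_nonneg ((u r).re * (d r).im - (u r).im * (d r).re)]
    have h2 : |(u r).re * (d r).re + (u r).im * (d r).im| ≤ ‖u r‖ * ‖d r‖ := by
      rw [← Real.sqrt_sq_eq_abs]
      calc Real.sqrt (((u r).re * (d r).re + (u r).im * (d r).im)^2)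
          ≤ Real.sqrt ((‖u r‖ * ‖d r‖)^2) := Real.sqrt_le_sqrt h1
        _ = ‖u r‖ * ‖d r‖ := Real.sqrt_sq (by positivity)
    calc |g r| = 2 * |(u r).re * (d r).re + (u r).im * (d r).im| := by
          rw [hg]; rw [abs_mul]; norm_num
      _ ≤ 2 * (‖u r‖ * ‖d r‖) := by linarith
  have hgb2 : ∀ r : ℝ, 0 < r → |r * g r| ≤ (1/2) * v r + 2 * (r^2 * ‖d r‖^2) := by
    intro r hr
    have := hgbound r
    have h0 : |r * g r| ≤ r * (2 * (‖u r‖ * ‖d r‖)) := by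
      rw [abs_mul, abs_of_pos hr]
      exact mul_le_mul_of_nonneg_left this hr.le
    have hAM : r * (2 * (‖u r‖ * ‖d r‖)) ≤ (1/2) * ‖u r‖^2 + 2 * (r^2 * ‖d r‖^2) := by
      nlinarith [sq_nonneg (‖u r‖ - 2 * (r * ‖d r‖)), norm_nonneg (u r), norm_nonneg (d r)]
    exact h0.trans hAM
  have hDab : ∀ a b : ℝ, 0 < a → IntegrableOn (fun r => r^2 * ‖d r‖^2) (Ioc a b) volume := by
    intro a b ha
    refine ⟨hwm.aestronglyMeasurable.restrict, ?_⟩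
    rw [hasFiniteIntegral_iff_ofReal (Eventually.of_forall (fun r => by positivity))]
    exact lt_of_le_of_lt
      (lintegral_mono_set (fun x hx => ha.trans hx.1)) (lt_top_iff_ne_top.2 hDtop)
  have hDab_le : ∀ a b : ℝ, 0 < a →
      ∫ r in Ioc a b, r^2 * ‖d r‖^2 ≤ D.toReal := by
    intro a b ha
    rw [integral_eq_lintegral_of_nonneg_ae (Eventually.of_forall (fun r => by positivity))
      hwm.aestronglyMeasurable.restrict]
    exact ENNReal.toReal_mono hDtop (lintegral_mono_set (fun x hx => ha.trans hx.1))
  have step1 : ∀ a b : ℝ, 0 < a → a ≤ b →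
      ∫ r in Ioc a b, v r ≤ 2*(b * v b) + 4 * D.toReal := by
    intro a b ha hab
    set F : ℝ → ℝ := fun r => r * v r with hF
    have hFder : ∀ r : ℝ, HasDerivAt F (v r + r * g r) r := by
      intro r
      have h6 := (hasDerivAt_id r).mul (hvderiv r)
      have : 1 * v r + r * g r = v r + r * g r := by ring
      rw [← this]
      exact h6
    have hint_v : IntegrableOn v (Ioc a b) := hvcont.integrableOn_Ioc
    have hint_w : IntegrableOn (fun r => r^2*‖d r‖^2) (Ioc a b) := hDab a b ha
    have hBint : IntegrableOn (fun r => (1/2)*v r + 2*(r^2*‖d r‖^2)) (Ioc a b) :=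
      (hint_v.const_mul _).add (hint_w.const_mul _)
    have hgm : Measurable g := by
      simp only [hg]
      fun_prop
    have hmeas_rg : AEStronglyMeasurable (fun r => r * g r) (volume.restrict (Ioc a b)) :=
      (measurable_id.mul hgm).aestronglyMeasurable.restrict
    have hint_rg : IntegrableOn (fun r => r * g r) (Ioc a b) := by
      refine Integrable.mono' hBint hmeas_rg ?_
      filter_upwards [ae_restrict_mem measurableSet_Ioc] with r hr
      rw [Real.norm_eq_abs]
      exact hgb2 r (ha.trans hr.1)
    have hIBP : ∫ r in a..b, (v r + r * g r) = F b - F a := by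
      apply intervalIntegral.integral_eq_sub_of_hasDerivAt (fun x _ => hFder x)
      rw [intervalIntegrable_iff_integrableOn_Ioc_of_le hab]
      exact hint_v.add hint_rg
    rw [intervalIntegral.integral_of_le hab, integral_add hint_v hint_rg] at hIBP
    have habs : |∫ r in Ioc a b, r * g r|
        ≤ (1/2) * (∫ r in Ioc a b, v r) + 2 * ∫ r in Ioc a b, r^2*‖d r‖^2 := by
      calc |∫ r in Ioc a b, r*g r| ≤ ∫ r in Ioc a b, |r * g r| := by
            simpa only [Real.norm_eq_abs] using
              norm_integral_le_integral_norm (μ := volume.restrict (Ioc a b))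
                (fun r => r * g r)
        _ ≤ ∫ r in Ioc a b, ((1/2)*v r + 2*(r^2*‖d r‖^2)) := by
            refine setIntegral_mono_on hint_rg.abs hBint measurableSet_Ioc ?_
            intro r hr
            exact hgb2 r (ha.trans hr.1)
        _ = (1/2) * (∫ r in Ioc a b, v r) + 2 * ∫ r in Ioc a b, r^2*‖d r‖^2 := by
            rw [integral_add (hint_v.const_mul _) (hint_w.const_mul _),
              integral_const_mul, integral_const_mul]
    have hFa : 0 ≤ F a := by
      have : 0 ≤ v a := by positivity
      have := mul_nonneg ha.le this
      simpa [hF] using this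
    have hFb : F b = b * v b := rfl
    have h8 := hDab_le a b ha
    have h9 := abs_le.1 habs
    linarith [hIBP, h9.1, h9.2]
  -- step 2 : good radii going to infinity
  have step2 : ∀ ε : ℝ, 0 < ε → ∀ b₀ : ℝ, ∃ b, b₀ ≤ b ∧ 0 < b ∧ b * v b < ε := by
    intro ε hε b₀
    by_contra hcon
    push_neg at hcon
    set c := max b₀ 1 with hc
    have hc1 : (1:ℝ) ≤ c := le_max_right _ _
    have hc0 : (0:ℝ) < c := lt_of_lt_of_le one_pos hc1
    have hlower : ∀ r : ℝ, r ∈ Ioi c → ENNReal.ofReal (c * ε) ≤ ENNReal.ofReal (r^2 * v r) := by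
      intro r hr
      have hrc : c < r := hr
      have hr0 : 0 < r := hc0.trans hrc
      have := hcon r ((le_max_left _ _).trans hrc.le) hr0
      apply ENNReal.ofReal_le_ofReal
      have hv0 : 0 ≤ v r := by positivity
      calc c * ε ≤ r * ε := by nlinarith
        _ ≤ r * (r * v r) := by nlinarith
        _ = r^2 * v r := by ring
    have htop : (∫⁻ r in Ioi c, ENNReal.ofReal (r^2 * v r)) = ⊤ := by
      have hconst : (∫⁻ _ in Ioi c, ENNReal.ofReal (c * ε)) = ⊤ := by
        rw [setLIntegral_const, Real.volume_Ioi, ENNReal.mul_top]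
        simp [ENNReal.ofReal_eq_zero, not_le, mul_pos hc0 hε]
      exact top_le_iff.1 (hconst ▸ setLIntegral_mono_ae (by fun_prop)
        (Eventually.of_forall hlower))
    exact hG (top_le_iff.1 (htop ▸ lintegral_mono_set (fun x hx => hc0.trans hx)))
  -- step 3 : uniform bound on compact pieces
  have step3 : ∀ a b : ℝ, 0 < a →
      ∫⁻ r in Ioc a b, ENNReal.ofReal (v r) ≤ 4 * D := by
    intro a b ha
    have h4D : 4 * D ≠ ⊤ := by
      simp [ENNReal.mul_eq_top, hDtop]
    refine ENNReal.le_of_forall_pos_le_add ?_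
    intro ε hε _
    obtain ⟨b', hb'1, hb'2, hb'3⟩ := step2 ((ε:ℝ)/2) (by positivity) (max a b)
    have hab' : a ≤ b' := (le_max_left a b).trans hb'1
    have hsub : Ioc a b ⊆ Ioc a b' := Ioc_subset_Ioc_right ((le_max_right a b).trans hb'1)
    have heq : ∫⁻ r in Ioc a b', ENNReal.ofReal (v r)
        = ENNReal.ofReal (∫ r in Ioc a b', v r) :=
      (ofReal_integral_eq_lintegral_ofReal hvcont.integrableOn_Ioc
        (Eventually.of_forall (fun r => by positivity))).symm
    calc ∫⁻ r in Ioc a b, ENNReal.ofReal (v r)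
        ≤ ∫⁻ r in Ioc a b', ENNReal.ofReal (v r) := lintegral_mono_set hsub
      _ = ENNReal.ofReal (∫ r in Ioc a b', v r) := heq
      _ ≤ ENNReal.ofReal (2*(b' * v b') + 4 * D.toReal) :=
          ENNReal.ofReal_le_ofReal (step1 a b' ha hab')
      _ ≤ ENNReal.ofReal ((ε:ℝ) + 4 * D.toReal) := by
          apply ENNReal.ofReal_le_ofReal; linarith
      _ ≤ ENNReal.ofReal (ε:ℝ) + ENNReal.ofReal (4 * D.toReal) := ENNReal.ofReal_add_le
      _ ≤ ↑ε + 4 * D := by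
          gcongr
          · exact le_of_eq ENNReal.ofReal_coe_nnreal
          · rw [ENNReal.ofReal_mul (by norm_num : (0:ℝ) ≤ 4), ENNReal.ofReal_toReal hDtop,
              ENNReal.ofReal_ofNat]
      _ = 4 * D + ↑ε := add_comm _ _
  -- assemble by monotone convergence
  set s : ℕ → Set ℝ := fun n => Ioc (1/(n+1) : ℝ) (n+1) with hs
  have hsmono : ∀ m n : ℕ, m ≤ n → s m ⊆ s n := by
    intro m n hmn
    apply Ioc_subset_Ioc
    · apply one_div_le_one_div_of_le
      · positivity
      · exact_mod_cast Nat.succ_le_succ hmn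
    · exact_mod_cast Nat.succ_le_succ hmn
  have hcover : ∀ r : ℝ, 0 < r → ∃ n : ℕ, r ∈ s n := by
    intro r hr
    obtain ⟨n, hn⟩ := exists_nat_gt (max r (1/r))
    refine ⟨n, ?_, ?_⟩
    · have h1 : 1/r < n + 1 := ((le_max_right r (1/r)).trans_lt hn).trans (lt_add_one _)
      rw [div_lt_iff₀ hr] at h1
      rw [div_lt_iff₀ (by positivity : (0:ℝ) < (n:ℝ)+1)]
      linarith
    · exact ((le_max_left r (1/r)).trans_lt hn).le.trans (le_of_lt (lt_add_one _))
  set f : ℕ → ℝ → ℝ≥0∞ := fun n => (s n).indicator (fun r => ENNReal.ofReal (v r)) with hf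
  have hfm : ∀ n, Measurable (f n) := by
    intro n
    exact (by fun_prop : Measurable fun r => ENNReal.ofReal (v r)).indicator measurableSet_Ioc
  have hfmono : Monotone f := by
    intro m n hmn
    exact Set.indicator_le_indicator_of_subset (hsmono m n hmn) (fun _ => zero_le)
  have hsup : ∀ r : ℝ, (⨆ n, f n r) = (Ioi (0:ℝ)).indicator (fun r => ENNReal.ofReal (v r)) r := by
    intro r
    by_cases hr : 0 < r
    · rw [Set.indicator_of_mem (Set.mem_Ioi.2 hr)]
      apply le_antisymm
      · exact iSup_le (fun n => Set.indicator_le_self _ _ r)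
      · obtain ⟨n, hn⟩ := hcover r hr
        refine le_iSup_of_le n ?_
        simp only [hf]
        rw [Set.indicator_of_mem hn]
    · have hr' : r ∉ Ioi (0:ℝ) := hr
      rw [Set.indicator_of_notMem hr']
      refine le_antisymm (iSup_le fun n => ?_) zero_le
      have hns : r ∉ s n := fun hmem => hr (lt_trans (by positivity) hmem.1)
      simp only [hf]
      rw [Set.indicator_of_notMem hns]
  calc ∫⁻ r in Ioi (0:ℝ), ENNReal.ofReal (v r)
      = ∫⁻ r, (Ioi (0:ℝ)).indicator (fun r => ENNReal.ofReal (v r)) r :=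
        (lintegral_indicator measurableSet_Ioi _).symm
    _ = ∫⁻ r, ⨆ n, f n r := by
        apply lintegral_congr
        intro r
        exact (hsup r).symm
    _ = ⨆ n, ∫⁻ r, f n r := lintegral_iSup hfm hfmono
    _ ≤ 4 * D := by
        refine iSup_le (fun n => ?_)
        rw [hf]
        rw [lintegral_indicator measurableSet_Ioc]
        exact step3 _ _ (by positivity)


theorem hardy3 (φ : E3 → ℂ) (hφ : Differentiable ℝ φ)
    (h2 : ∫⁻ x : E3, ENNReal.ofReal (‖φ x‖^2) ≠ ⊤) :
    ∫⁻ x : E3, ENNReal.ofReal (‖φ x‖^2) * (ENNReal.ofReal (‖x‖^2))⁻¹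
      ≤ 4 * ∫⁻ x : E3, ENNReal.ofReal (‖fderiv ℝ φ x‖^2) := by
  have hφc : Continuous φ := hφ.continuous
  have hfdm : Measurable fun x : E3 => ‖fderiv ℝ φ x‖ := (measurable_fderiv ℝ φ).norm
  have hF1m : Measurable fun x : E3 =>
      ENNReal.ofReal (‖φ x‖^2) * (ENNReal.ofReal (‖x‖^2))⁻¹ := by fun_prop
  have hF2m : Measurable fun x : E3 => ENNReal.ofReal (‖fderiv ℝ φ x‖^2) := by fun_prop
  have hF3m : Measurable fun x : E3 => ENNReal.ofReal (‖φ x‖^2) := by fun_prop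
  have hP1 := polar3 _ hF1m
  have hP2 := polar3 _ hF2m
  have hP3 := polar3 _ hF3m
  -- norm of points on rays
  have hray : ∀ (ω : sphere (0:E3) 1) (r : ℝ), 0 < r → ‖r • (ω : E3)‖ = r := by
    intro ω r hr
    rw [norm_smul, mem_sphere_zero_iff_norm.1 ω.2, Real.norm_eq_abs, abs_of_pos hr, mul_one]
  -- the inner integrand for F1 simplifies
  have hinner1 : ∀ ω : sphere (0:E3) 1,
      (∫⁻ r in Set.Ioi (0:ℝ), ENNReal.ofReal (r^2) *
        (ENNReal.ofReal (‖φ (r • (ω:E3))‖^2) * (ENNReal.ofReal (‖r • (ω:E3)‖^2))⁻¹))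
      = ∫⁻ r in Set.Ioi (0:ℝ), ENNReal.ofReal (‖φ (r • (ω:E3))‖^2) := by
    intro ω
    refine setLIntegral_congr_fun measurableSet_Ioi ?_
    intro r hr
    beta_reduce
    rw [hray ω r hr]
    rw [← mul_assoc, mul_comm (ENNReal.ofReal (r^2)), mul_assoc,
      ENNReal.mul_inv_cancel (by simp only [ne_eq, ENNReal.ofReal_eq_zero, not_le]; exact pow_pos hr 2)
        ENNReal.ofReal_ne_top, mul_one]
  -- a.e. finiteness of the weighted L² norm along rays
  have hGm : Measurable fun ω : sphere (0:E3) 1 =>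
      ∫⁻ r in Set.Ioi (0:ℝ), ENNReal.ofReal (r^2 * ‖φ (r • (ω:E3))‖^2) := by
    apply Measurable.lintegral_prod_right'
      (f := fun p : sphere (0:E3) 1 × ℝ => ENNReal.ofReal (p.2^2 * ‖φ (p.2 • (p.1:E3))‖^2))
    fun_prop
  have hGfin : ∀ᵐ (ω : sphere (0:E3) 1) ∂((volume : Measure E3).toSphere),
      (∫⁻ r in Set.Ioi (0:ℝ), ENNReal.ofReal (r^2 * ‖φ (r • (ω:E3))‖^2)) < ⊤ := by
    apply ae_lt_top hGm
    have : ∫⁻ ω : sphere (0:E3) 1,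
        (∫⁻ r in Set.Ioi (0:ℝ), ENNReal.ofReal (r^2 * ‖φ (r • (ω:E3))‖^2))
          ∂((volume : Measure E3).toSphere)
        = ∫⁻ x : E3, ENNReal.ofReal (‖φ x‖^2) := by
      rw [hP3]
      apply lintegral_congr
      intro ω
      apply lintegral_congr
      intro r
      rw [ENNReal.ofReal_mul (by positivity)]
    rw [this]
    exact h2
  -- per-ray Hardy inequality
  have hkey : ∀ᵐ (ω : sphere (0:E3) 1) ∂((volume : Measure E3).toSphere),
      (∫⁻ r in Set.Ioi (0:ℝ), ENNReal.ofReal (r^2) *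
        (ENNReal.ofReal (‖φ (r • (ω:E3))‖^2) * (ENNReal.ofReal (‖r • (ω:E3)‖^2))⁻¹))
      ≤ 4 * ∫⁻ r in Set.Ioi (0:ℝ),
          ENNReal.ofReal (r^2) * ENNReal.ofReal (‖fderiv ℝ φ (r • (ω:E3))‖^2) := by
    filter_upwards [hGfin] with ω hω
    rw [hinner1 ω]
    set u : ℝ → ℂ := fun r => φ (r • (ω:E3)) with hu
    have hud : ∀ r : ℝ, HasDerivAt u (fderiv ℝ φ (r • (ω:E3)) (ω:E3)) r := by
      intro r
      have hs : HasDerivAt (fun r : ℝ => r • (ω:E3)) ((1:ℝ) • (ω:E3)) r :=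
        (hasDerivAt_id r).smul_const (ω:E3)
      rw [one_smul] at hs
      exact ((hφ _).hasFDerivAt).comp_hasDerivAt r hs
    have hudiff : Differentiable ℝ u := fun r => (hud r).differentiableAt
    have hG' : ∫⁻ r in Set.Ioi (0:ℝ), ENNReal.ofReal (r^2 * ‖u r‖^2) ≠ ⊤ := hω.ne
    have h1d := oneD u hudiff hG'
    refine le_trans h1d ?_
    gcongr 4 * ?_
    refine lintegral_mono ?_
    intro r
    show ENNReal.ofReal (r^2 * ‖deriv u r‖^2)
      ≤ ENNReal.ofReal (r^2) * ENNReal.ofReal (‖fderiv ℝ φ (r • (ω:E3))‖^2)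
    rw [(hud r).deriv]
    rw [ENNReal.ofReal_mul (by positivity : (0:ℝ) ≤ r^2)]
    refine mul_le_mul_right (ENNReal.ofReal_le_ofReal ?_) _
    have hle : ‖fderiv ℝ φ (r • (ω:E3)) (ω:E3)‖ ≤ ‖fderiv ℝ φ (r • (ω:E3))‖ := by
      calc ‖fderiv ℝ φ (r • (ω:E3)) (ω:E3)‖
          ≤ ‖fderiv ℝ φ (r • (ω:E3))‖ * ‖(ω:E3)‖ := ContinuousLinearMap.le_opNorm _ _
        _ = ‖fderiv ℝ φ (r • (ω:E3))‖ := by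
            rw [mem_sphere_zero_iff_norm.1 ω.2, mul_one]
    have h0 : (0:ℝ) ≤ ‖fderiv ℝ φ (r • (ω:E3)) (ω:E3)‖ := norm_nonneg _
    nlinarith
  rw [hP1, hP2]
  calc ∫⁻ ω : sphere (0:E3) 1, (∫⁻ r in Set.Ioi (0:ℝ), ENNReal.ofReal (r^2) *
          (ENNReal.ofReal (‖φ (r • (ω:E3))‖^2) * (ENNReal.ofReal (‖r • (ω:E3)‖^2))⁻¹))
          ∂((volume : Measure E3).toSphere)
      ≤ ∫⁻ ω : sphere (0:E3) 1, 4 * (∫⁻ r in Set.Ioi (0:ℝ),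
          ENNReal.ofReal (r^2) * ENNReal.ofReal (‖fderiv ℝ φ (r • (ω:E3))‖^2))
          ∂((volume : Measure E3).toSphere) := lintegral_mono_ae hkey
    _ = 4 * ∫⁻ ω : sphere (0:E3) 1, (∫⁻ r in Set.Ioi (0:ℝ),
          ENNReal.ofReal (r^2) * ENNReal.ofReal (‖fderiv ℝ φ (r • (ω:E3))‖^2))
          ∂((volume : Measure E3).toSphere) := lintegral_const_mul 4 (by
            apply Measurable.lintegral_prod_right'
              (f := fun p : sphere (0:E3) 1 × ℝ => ENNReal.ofReal (p.2^2) *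
                ENNReal.ofReal (‖fderiv ℝ φ (p.2 • (p.1:E3))‖^2))
            fun_prop)

/-- Under the stated hypotheses, the correlation kernel `k` satisfies
`‖k‖_{L²(ℝ³×ℝ³)} ≤ C C₀ ‖φ‖_{L²} ‖∇φ‖_{L²}` for a universal constant `C`. -/
theorem corrK_L2_bound :
    ∃ C : ℝ, 0 < C ∧
      ∀ (C₀ N : ℝ) (w : E3 → ℝ) (φ : E3 → ℂ),
        0 < C₀ → 1 ≤ N →
        Measurable w →
        (∀ x, 0 ≤ w x) →
        (∀ x, w x ≤ min 1 (C₀ / (1 + ‖x‖))) →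
        Differentiable ℝ φ →
        Integrable (fun x : E3 => ‖φ x‖ ^ 2) →
        Integrable (fun x : E3 => ‖fderiv ℝ φ x‖ ^ 2) →
        Integrable (fun p : E3 × E3 => ‖corrK N w φ p.1 p.2‖ ^ 2) ∧
        kl2 (corrK N w φ) ≤ C * C₀ * l2 φ * l2grad φ := by
  refine ⟨2, two_pos, ?_⟩
  intro C₀ N w φ hC₀ hN hw hw0 hwle hφ hφ2 hdφ2
  have hN0 : 0 < N := lt_of_lt_of_le one_pos hN
  have hφc : Continuous φ := hφ.continuous
  set P : ℝ≥0∞ := ∫⁻ x : E3, ENNReal.ofReal (‖φ x‖^2) with hP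
  set R : ℝ≥0∞ := ∫⁻ x : E3, ENNReal.ofReal (‖fderiv ℝ φ x‖^2) with hR
  have hPfin : P ≠ ⊤ := by
    rw [hP]
    exact ((hasFiniteIntegral_iff_ofReal
      (Eventually.of_forall (fun x => by positivity))).1 hφ2.hasFiniteIntegral).ne
  have hRfin : R ≠ ⊤ := by
    rw [hR]
    exact ((hasFiniteIntegral_iff_ofReal
      (Eventually.of_forall (fun x => by positivity))).1 hdφ2.hasFiniteIntegral).ne
  -- pointwise real bound
  have hptR : ∀ z : E3, (N * w (N • z)) * ‖z‖ ≤ C₀ := by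
    intro z
    have h1 : w (N • z) ≤ C₀ / (1 + ‖N • z‖) := (hwle _).trans (min_le_right _ _)
    have h2 : ‖N • z‖ = N * ‖z‖ := by
      rw [norm_smul, Real.norm_eq_abs, abs_of_pos hN0]
    rw [h2] at h1
    have h3 : (0:ℝ) < 1 + N * ‖z‖ := by positivity
    have h4 : w (N • z) * (1 + N * ‖z‖) ≤ C₀ := by
      rw [← le_div_iff₀ h3]
      exact h1
    nlinarith [hw0 (N • z), norm_nonneg z]
  -- pointwise ENNReal bound
  have hpt : ∀ x y : E3, ENNReal.ofReal (‖corrK N w φ x y‖^2)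
      ≤ (ENNReal.ofReal (C₀^2) * ENNReal.ofReal (‖φ x‖^2))
        * (ENNReal.ofReal (‖φ y‖^2) * (ENNReal.ofReal (‖y - x‖^2))⁻¹) := by
    intro x y
    set A : ℝ := N * w (N • (x - y)) with hA
    have hA0 : 0 ≤ A := mul_nonneg hN0.le (hw0 _)
    have hnorm : ‖corrK N w φ x y‖^2 = A^2 * (‖φ x‖^2 * ‖φ y‖^2) := by
      simp only [corrK, norm_mul, norm_neg, Complex.norm_real, Real.norm_eq_abs,
        abs_of_nonneg hA0]
      rw [abs_of_pos hN0, abs_of_nonneg (hw0 _)]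
      ring
    have hA2 : ENNReal.ofReal (A^2) ≤ ENNReal.ofReal (C₀^2) / ENNReal.ofReal (‖y - x‖^2) := by
      rw [ENNReal.le_div_iff_mul_le
        (Or.inr (by simp [ENNReal.ofReal_eq_zero, not_le]; positivity))
        (Or.inl ENNReal.ofReal_ne_top)]
      rw [← ENNReal.ofReal_mul (by positivity)]
      apply ENNReal.ofReal_le_ofReal
      have h5 : A * ‖x - y‖ ≤ C₀ := hptR (x - y)
      have h6 : ‖y - x‖ = ‖x - y‖ := norm_sub_rev y x
      rw [h6]
      nlinarith [norm_nonneg (x - y), mul_nonneg hA0 (norm_nonneg (x - y))]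
    calc ENNReal.ofReal (‖corrK N w φ x y‖^2)
        = ENNReal.ofReal (A^2) * (ENNReal.ofReal (‖φ x‖^2) * ENNReal.ofReal (‖φ y‖^2)) := by
          rw [hnorm, ENNReal.ofReal_mul (by positivity), ENNReal.ofReal_mul (by positivity)]
      _ ≤ (ENNReal.ofReal (C₀^2) / ENNReal.ofReal (‖y - x‖^2))
            * (ENNReal.ofReal (‖φ x‖^2) * ENNReal.ofReal (‖φ y‖^2)) :=
          mul_le_mul_left hA2 _
      _ = (ENNReal.ofReal (C₀^2) * ENNReal.ofReal (‖φ x‖^2))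
            * (ENNReal.ofReal (‖φ y‖^2) * (ENNReal.ofReal (‖y - x‖^2))⁻¹) := by
          rw [div_eq_mul_inv]
          ring
  -- inner integral bound by translated Hardy inequality
  have hinner : ∀ x : E3,
      (∫⁻ y : E3, ENNReal.ofReal (‖φ y‖^2) * (ENNReal.ofReal (‖y - x‖^2))⁻¹) ≤ 4 * R := by
    intro x
    set ψ : E3 → ℂ := fun z => φ (z + x) with hψ
    have hψd : Differentiable ℝ ψ := hφ.comp (differentiable_id.add_const x)
    have hψfd : ∀ z : E3, fderiv ℝ ψ z = fderiv ℝ φ (z + x) := by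
      intro z
      have h7 : HasFDerivAt ψ (fderiv ℝ φ (z + x)) z := by
        have h8 : HasFDerivAt (fun z : E3 => z + x) (ContinuousLinearMap.id ℝ E3) z :=
          (hasFDerivAt_id z).add_const x
        have h9 := ((hφ (z + x)).hasFDerivAt).comp z h8
        rw [ContinuousLinearMap.comp_id] at h9
        exact h9
      exact h7.fderiv
    have hψ2 : ∫⁻ z : E3, ENNReal.ofReal (‖ψ z‖^2) ≠ ⊤ := by
      rw [hψ]
      rw [lintegral_add_right_eq_self (fun y : E3 => ENNReal.ofReal (‖φ y‖^2)) x]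
      exact hPfin
    have hhar := hardy3 ψ hψd hψ2
    have htrans : (∫⁻ y : E3, ENNReal.ofReal (‖φ y‖^2) * (ENNReal.ofReal (‖y - x‖^2))⁻¹)
        = ∫⁻ z : E3, ENNReal.ofReal (‖ψ z‖^2) * (ENNReal.ofReal (‖z‖^2))⁻¹ := by
      rw [← lintegral_add_right_eq_self
        (fun y : E3 => ENNReal.ofReal (‖φ y‖^2) * (ENNReal.ofReal (‖y - x‖^2))⁻¹) x]
      apply lintegral_congr
      intro z
      simp [hψ]
    have htrans2 : (∫⁻ z : E3, ENNReal.ofReal (‖fderiv ℝ ψ z‖^2)) = R := by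
      rw [hR, ← lintegral_add_right_eq_self
        (fun y : E3 => ENNReal.ofReal (‖fderiv ℝ φ y‖^2)) x]
      apply lintegral_congr
      intro z
      rw [hψfd z]
    rw [htrans]
    rw [htrans2] at hhar
    exact hhar
  -- measurability of the squared kernel
  have hkm : Measurable fun p : E3 × E3 => ‖corrK N w φ p.1 p.2‖^2 := by
    apply Measurable.pow_const
    apply Measurable.norm
    simp only [corrK]
    apply Measurable.mul
    apply Measurable.mul
    · apply Measurable.neg
      exact Complex.measurable_ofReal.comp
        ((measurable_const.mul (hw.comp ((measurable_fst.sub measurable_snd).const_smul N))))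
    · exact hφc.measurable.comp measurable_fst
    · exact hφc.measurable.comp measurable_snd
  -- the total lintegral bound
  set c : ℝ≥0∞ := ENNReal.ofReal (C₀^2) with hc
  have hcfin : c ≠ ⊤ := ENNReal.ofReal_ne_top
  set I : ℝ≥0∞ := ∫⁻ p : E3 × E3, ENNReal.ofReal (‖corrK N w φ p.1 p.2‖^2) with hI
  have hIbound : I ≤ c * (4 * R) * P := by
    have hprod : I = ∫⁻ x : E3, ∫⁻ y : E3, ENNReal.ofReal (‖corrK N w φ x y‖^2) := by
      rw [hI, MeasureTheory.Measure.volume_eq_prod, lintegral_prod]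
      exact ((by fun_prop : Measurable
        fun p : E3 × E3 => ENNReal.ofReal (‖corrK N w φ p.1 p.2‖^2))).aemeasurable
    rw [hprod]
    calc ∫⁻ x : E3, ∫⁻ y : E3, ENNReal.ofReal (‖corrK N w φ x y‖^2)
        ≤ ∫⁻ x : E3, ∫⁻ y : E3, (c * ENNReal.ofReal (‖φ x‖^2))
            * (ENNReal.ofReal (‖φ y‖^2) * (ENNReal.ofReal (‖y - x‖^2))⁻¹) := by
          refine lintegral_mono (fun x => lintegral_mono (fun y => hpt x y))
      _ = ∫⁻ x : E3, (c * ENNReal.ofReal (‖φ x‖^2))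
            * ∫⁻ y : E3, ENNReal.ofReal (‖φ y‖^2) * (ENNReal.ofReal (‖y - x‖^2))⁻¹ := by
          apply lintegral_congr
          intro x
          rw [lintegral_const_mul' _ _
            (ENNReal.mul_ne_top hcfin ENNReal.ofReal_ne_top)]
      _ ≤ ∫⁻ x : E3, (c * ENNReal.ofReal (‖φ x‖^2)) * (4 * R) := by
          refine lintegral_mono (fun x => mul_le_mul_right (hinner x) _)
      _ = ∫⁻ x : E3, (c * (4 * R)) * ENNReal.ofReal (‖φ x‖^2) := by
          apply lintegral_congr
          intro x
          ring
      _ = c * (4 * R) * P := by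
          rw [lintegral_const_mul' _ _
            (ENNReal.mul_ne_top hcfin (ENNReal.mul_ne_top (by simp) hRfin))]
  have hIfin : I ≠ ⊤ :=
    (hIbound.trans_lt (ENNReal.mul_lt_top
      (ENNReal.mul_lt_top hcfin.lt_top (ENNReal.mul_lt_top (by simp) hRfin.lt_top))
      hPfin.lt_top)).ne
  have hkint : Integrable (fun p : E3 × E3 => ‖corrK N w φ p.1 p.2‖ ^ 2) := by
    refine ⟨hkm.aestronglyMeasurable, ?_⟩
    rw [hasFiniteIntegral_iff_ofReal (Eventually.of_forall (fun p => by positivity))]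
    exact hIfin.lt_top
  refine ⟨hkint, ?_⟩
  -- convert everything to real numbers
  have hIreal : ∫ p : E3 × E3, ‖corrK N w φ p.1 p.2‖^2 = I.toReal := by
    rw [hI, integral_eq_lintegral_of_nonneg_ae (Eventually.of_forall (fun p => by positivity))
      hkm.aestronglyMeasurable]
  have hPreal : ∫ x : E3, ‖φ x‖^2 = P.toReal := by
    rw [hP, integral_eq_lintegral_of_nonneg_ae (Eventually.of_forall (fun x => by positivity))
      hφ2.aestronglyMeasurable]
  have hRreal : ∫ x : E3, ‖fderiv ℝ φ x‖^2 = R.toReal := by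
    rw [hR, integral_eq_lintegral_of_nonneg_ae (Eventually.of_forall (fun x => by positivity))
      hdφ2.aestronglyMeasurable]
  have hIle : I.toReal ≤ 4 * C₀^2 * R.toReal * P.toReal := by
    have h10 := ENNReal.toReal_mono
      (ENNReal.mul_ne_top (ENNReal.mul_ne_top hcfin
        (ENNReal.mul_ne_top (by simp) hRfin)) hPfin) hIbound
    rw [ENNReal.toReal_mul, ENNReal.toReal_mul, ENNReal.toReal_mul] at h10
    have h11 : c.toReal = C₀^2 := by
      rw [hc, ENNReal.toReal_ofReal (by positivity)]
    have h12 : (4 : ℝ≥0∞).toReal = 4 := by norm_num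
    rw [h11, h12] at h10
    linarith
  -- final square-root computation
  rw [kl2, l2, l2grad, hIreal, hPreal, hRreal]
  rw [← Real.sqrt_eq_rpow, ← Real.sqrt_eq_rpow, ← Real.sqrt_eq_rpow]
  have hPnn : 0 ≤ P.toReal := ENNReal.toReal_nonneg
  have hRnn : 0 ≤ R.toReal := ENNReal.toReal_nonneg
  calc Real.sqrt I.toReal ≤ Real.sqrt (4 * C₀^2 * R.toReal * P.toReal) :=
        Real.sqrt_le_sqrt hIle
    _ = 2 * C₀ * Real.sqrt P.toReal * Real.sqrt R.toReal := by
        rw [show 4 * C₀^2 * R.toReal * P.toReal = (2*C₀)^2 * (R.toReal * P.toReal) by ring]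
        rw [Real.sqrt_mul (by positivity), Real.sqrt_sq (by positivity),
          Real.sqrt_mul hRnn]
        ring
end
end

section
/- Let ψ : ℝ³ → ℂ also be weakly differentiable with ψ, ∇ψ ∈ L²(ℝ³), assume ‖φ‖_{L^∞}, ‖ψ‖_{L^∞} < ∞, and define the kernel ℓ(x,y) := −N w(N(x−y)) ( ψ(x) φ(y) + φ(x) ψ(y) ). Then sup_{x∈ℝ³} ‖ℓ(·,x)‖_{L²(ℝ³)} ≤ C C₀ ( ‖φ‖_{L^∞} ‖∇ψ‖_{L²} + ‖ψ‖_{L^∞} ‖∇φ‖_{L²} ) for a universal constant C. -/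
open MeasureTheory Real Filter Topology
open Set
open scoped ENNReal NNReal

noncomputable section

/-- The kernel `ℓ(x,y) = -N w(N(x-y)) (ψ(x) φ(y) + φ(x) ψ(y))`. -/
def corrKdot (N : ℝ) (w : E3 → ℝ) (φ ψ : E3 → ℂ) : E3 → E3 → ℂ :=
  fun x y => -(Complex.ofReal (N * w (N • (x - y)))) * (ψ x * φ y + φ x * ψ y)



lemma cauchy2 (z w : ℂ) : |z.re*w.re + z.im*w.im| ≤ ‖z‖*‖w‖ := by
  have h2 : (z.re*w.re + z.im*w.im)^2 ≤ (‖z‖*‖w‖)^2 := by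
    have hz : ‖z‖^2 = z.re^2 + z.im^2 := by
      rw [Complex.sq_norm, Complex.normSq_apply]; ring
    have hw : ‖w‖^2 = w.re^2 + w.im^2 := by
      rw [Complex.sq_norm, Complex.normSq_apply]; ring
    rw [mul_pow, hz, hw]
    nlinarith [sq_nonneg (z.re*w.im - z.im*w.re)]
  calc |z.re*w.re + z.im*w.im| = Real.sqrt ((z.re*w.re + z.im*w.im)^2) := (Real.sqrt_sq_eq_abs _).symm
    _ ≤ Real.sqrt ((‖z‖*‖w‖)^2) := Real.sqrt_le_sqrt h2
    _ = ‖z‖*‖w‖ := Real.sqrt_sq (by positivity)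

lemma sq_norm_hasDerivAt (g : ℝ → ℂ) (hg : Differentiable ℝ g) (r : ℝ) :
    HasDerivAt (fun t => ‖g t‖^2)
      (2*((g r).re*(deriv g r).re + (g r).im*(deriv g r).im)) r := by
  have h := (hg r).hasDerivAt
  have hre : HasDerivAt (fun t => (g t).re) ((deriv g r).re) r :=
    Complex.reCLM.hasFDerivAt.comp_hasDerivAt r h
  have him : HasDerivAt (fun t => (g t).im) ((deriv g r).im) r :=
    Complex.imCLM.hasFDerivAt.comp_hasDerivAt r h
  have h2 : HasDerivAt (fun t => (g t).re^2 + (g t).im^2)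
      (2*((g r).re*(deriv g r).re + (g r).im*(deriv g r).im)) r := by
    have := (hre.mul hre).add (him.mul him)
    have h3 : (fun t => (g t).re^2 + (g t).im^2) = (fun t => (g t).re * (g t).re + (g t).im * (g t).im) := by ext t; ring
    rw [h3, show 2*((g r).re*(deriv g r).re + (g r).im*(deriv g r).im) = (deriv g r).re * (g r).re + (g r).re * (deriv g r).re + ((deriv g r).im * (g r).im + (g r).im * (deriv g r).im) by ring]
    exact this
  convert h2 using 2 with t
  rw [Complex.sq_norm, Complex.normSq_apply]; ring

lemma hardy1D_core (g : ℝ → ℂ) (hg : Differentiable ℝ g) {ε R : ℝ}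
    (hε : 0 < ε) (hεR : ε ≤ R)
    (hB : IntegrableOn (fun r => r^2 * ‖deriv g r‖^2) (Ioc ε R)) :
    ∫ r in Ioc ε R, ‖g r‖^2 ≤ 2*(R*‖g R‖^2) + 4 * ∫ r in Ioc ε R, r^2*‖deriv g r‖^2 := by
  set D : ℝ → ℝ := fun r => 2*((g r).re*(deriv g r).re + (g r).im*(deriv g r).im) with hD
  have hF : ∀ t : ℝ, HasDerivAt (fun r => r * ‖g r‖^2) (‖g t‖^2 + t * D t) t := by
    intro t
    have h := (hasDerivAt_id t).mul (sq_norm_hasDerivAt g hg t)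
    rw [show ‖g t‖^2 + t * D t = 1 * ‖g t‖ ^ 2 + id t * (2 * ((g t).re * (deriv g t).re + (g t).im * (deriv g t).im)) by simp only [hD, id_eq]; ring]
    exact h
  -- measurability facts
  have hgc : Continuous g := hg.continuous
  have hderiv_meas : Measurable (deriv g) := measurable_deriv g
  have hDmeas : Measurable D := by
    apply Measurable.mul measurable_const
    exact (((Complex.measurable_re.comp hgc.measurable).mul
        (Complex.measurable_re.comp hderiv_meas)).add
      ((Complex.measurable_im.comp hgc.measurable).mul
        (Complex.measurable_im.comp hderiv_meas)))
  -- bound ‖g‖ on [ε, R]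
  obtain ⟨M, hM⟩ : ∃ M, ∀ t ∈ Icc ε R, ‖g t‖ ≤ M :=
    (isCompact_Icc).exists_bound_of_continuousOn hgc.continuousOn
  -- deriv g is L² hence L¹ on Ioc ε R
  have hg'2 : IntegrableOn (fun r => ‖deriv g r‖^2) (Ioc ε R) := by
    apply Integrable.mono' (hB.const_mul (ε⁻¹^2))
    · exact (hderiv_meas.norm.pow_const 2).aestronglyMeasurable
    · filter_upwards [ae_restrict_mem measurableSet_Ioc] with t ht
      rw [Real.norm_of_nonneg (by positivity)]
      have h1 : 1 ≤ (t/ε)^2 := by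
        apply one_le_pow₀
        rw [le_div_iff₀ hε]; simpa using ht.1.le
      calc ‖deriv g t‖^2 = 1 * ‖deriv g t‖^2 := (one_mul _).symm
        _ ≤ (t/ε)^2 * ‖deriv g t‖^2 := by gcongr
        _ = ε⁻¹^2 * (t^2 * ‖deriv g t‖^2) := by ring
  have hg'1 : IntegrableOn (fun r => ‖deriv g r‖) (Ioc ε R) := by
    have hc : IntegrableOn (fun _ : ℝ => (1:ℝ)) (Ioc ε R) :=
      integrableOn_const measure_Ioc_lt_top.ne
    apply Integrable.mono' (hg'2.add hc)
    · exact hderiv_meas.norm.aestronglyMeasurable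
    · refine Eventually.of_forall fun t => ?_
      simp only [Pi.add_apply, norm_norm]
      nlinarith [sq_nonneg (‖deriv g t‖ - 1), norm_nonneg (deriv g t)]
  -- integrability of the derivative of F
  have htD : IntegrableOn (fun t => t * D t) (Ioc ε R) := by
    apply Integrable.mono' ((hg'1.const_mul (|R| * (2*M))))
    · exact (measurable_id.mul hDmeas).aestronglyMeasurable
    · filter_upwards [ae_restrict_mem measurableSet_Ioc] with t ht
      have hDb : |D t| ≤ 2*M*‖deriv g t‖ := by
        have := cauchy2 (g t) (deriv g t)
        have hMt : ‖g t‖ ≤ M := hM t ⟨ht.1.le, ht.2⟩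
        have h0 : (0:ℝ) ≤ ‖deriv g t‖ := norm_nonneg _
        calc |D t| = 2*|(g t).re*(deriv g t).re + (g t).im*(deriv g t).im| := by
              rw [hD]; rw [abs_mul]; simp
          _ ≤ 2*(‖g t‖*‖deriv g t‖) := by linarith
          _ ≤ 2*M*‖deriv g t‖ := by nlinarith
      calc ‖t * D t‖ = |t| * |D t| := abs_mul _ _
        _ ≤ |R| * (2*M*‖deriv g t‖) := by
            apply mul_le_mul _ hDb (abs_nonneg _) (abs_nonneg _)
            rw [abs_le]; constructor <;> [linarith [ht.1, hε, abs_nonneg R]; skip]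
            · exact le_trans ht.2 (le_abs_self R)
        _ = |R| * (2*M) * ‖deriv g t‖ := by ring
  have hF' : IntegrableOn (fun t => ‖g t‖^2 + t * D t) (Ioc ε R) :=
    ((hgc.norm.pow 2).integrableOn_Ioc).add htD
  have hFTC : ∫ t in ε..R, (‖g t‖^2 + t * D t) = R * ‖g R‖^2 - ε * ‖g ε‖^2 := by
    apply intervalIntegral.integral_eq_sub_of_hasDerivAt (fun t _ => hF t)
    rw [intervalIntegrable_iff_integrableOn_Ioc_of_le hεR]
    exact hF'
  have hptw : ∀ t ∈ Ioc ε R, ‖g t‖^2 ≤ 2*(‖g t‖^2 + t * D t) + 4*(t^2*‖deriv g t‖^2) := by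
    intro t ht
    have hDb : |D t| ≤ 2*‖g t‖*‖deriv g t‖ := by
      have := cauchy2 (g t) (deriv g t)
      calc |D t| = 2*|(g t).re*(deriv g t).re + (g t).im*(deriv g t).im| := by
            rw [hD]; rw [abs_mul]; simp
        _ ≤ 2*‖g t‖*‖deriv g t‖ := by linarith
    have ht0 : 0 < t := lt_trans hε ht.1
    have h1 : -(t * D t) ≤ t * (2*‖g t‖*‖deriv g t‖) := by
      have := (abs_le.mp hDb).1
      calc -(t * D t) = t * (-D t) := by ring
        _ ≤ t * (2*‖g t‖*‖deriv g t‖) := by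
            apply mul_le_mul_of_nonneg_left _ ht0.le; linarith
    nlinarith [sq_nonneg (‖g t‖ - 2*t*‖deriv g t‖)]
  calc ∫ r in Ioc ε R, ‖g r‖^2
      ≤ ∫ r in Ioc ε R, (2*(‖g r‖^2 + r * D r) + 4*(r^2*‖deriv g r‖^2)) := by
        apply setIntegral_mono_on (hgc.norm.pow 2).integrableOn_Ioc
          ((hF'.const_mul 2).add (hB.const_mul 4)) measurableSet_Ioc hptw
    _ = 2 * (∫ r in Ioc ε R, (‖g r‖^2 + r * D r)) + 4 * ∫ r in Ioc ε R, r^2*‖deriv g r‖^2 := by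
        rw [integral_add ((hF'.const_mul 2)) (hB.const_mul 4), integral_const_mul, integral_const_mul]
    _ ≤ 2*(R*‖g R‖^2) + 4 * ∫ r in Ioc ε R, r^2*‖deriv g r‖^2 := by
        have : ∫ r in Ioc ε R, (‖g r‖^2 + r * D r) = R * ‖g R‖^2 - ε * ‖g ε‖^2 := by
          rw [← hFTC, intervalIntegral.integral_of_le hεR]
        rw [this]
        have : 0 ≤ ε * ‖g ε‖^2 := by positivity
        linarith

lemma hardy1D (g : ℝ → ℂ) (hg : Differentiable ℝ g)
    (hB : IntegrableOn (fun r => r^2*‖deriv g r‖^2) (Ioi (0:ℝ)))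
    (hD : IntegrableOn (fun r => r^2*‖g r‖^2) (Ioi (0:ℝ))) :
    ∫⁻ r in Ioi (0:ℝ), ENNReal.ofReal (‖g r‖^2)
      ≤ ENNReal.ofReal (4 * ∫ r in Ioi (0:ℝ), r^2*‖deriv g r‖^2) := by
  set K : ℝ := 4 * ∫ r in Ioi (0:ℝ), r^2*‖deriv g r‖^2 with hK
  have hgc : Continuous g := hg.continuous
  have hKnn : 0 ≤ K := by
    rw [hK]
    have : 0 ≤ ∫ r in Ioi (0:ℝ), r^2*‖deriv g r‖^2 :=
      setIntegral_nonneg measurableSet_Ioi (fun t _ => by positivity)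
    linarith
  -- boundary term goes to zero along a subsequence
  have hbdry : ∀ δ : ℝ, 0 < δ → ∃ᶠ R in atTop, R * ‖g R‖^2 < δ := by
    intro δ hδ
    by_contra hcon
    rw [Filter.not_frequently] at hcon
    simp only [not_lt] at hcon
    rw [Filter.eventually_atTop] at hcon
    obtain ⟨R₀, hR₀⟩ := hcon
    set R₁ := max R₀ 1 with hR₁
    have hδint : IntegrableOn (fun _ : ℝ => δ) (Ioi R₁) := by
      apply Integrable.mono' (hD.mono_set (Ioi_subset_Ioi (by positivity)))
      · exact aestronglyMeasurable_const
      · filter_upwards [ae_restrict_mem measurableSet_Ioi] with t ht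
        have ht1 : (1:ℝ) ≤ t := le_trans (le_max_right _ _) ht.le
        have h2 : δ ≤ t * ‖g t‖^2 := hR₀ t (le_trans (le_max_left _ _) ht.le)
        rw [Real.norm_of_nonneg hδ.le]
        nlinarith [norm_nonneg (g t), sq_nonneg (‖g t‖)]
    rw [IntegrableOn, integrable_const_iff] at hδint
    rcases hδint with h | h
    · exact hδ.ne' h
    · replace h := h.measure_univ_lt_top; rw [Measure.restrict_apply_univ, Real.volume_Ioi] at h
      exact (lt_irrefl _ h).elim
  -- bound on Ioi ε for suprema over truncations
  have key : ∀ δ : ℝ, 0 < δ → ∀ n : ℕ,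
      ∫⁻ r in Ioc (1/(n+1) : ℝ) (n+1 : ℝ), ENNReal.ofReal (‖g r‖^2)
        ≤ ENNReal.ofReal (2*δ + K) := by
    intro δ hδ n
    set ε : ℝ := 1/(n+1) with hε
    have hε0 : 0 < ε := by positivity
    obtain ⟨R, hRge, hRsm⟩ := (Filter.frequently_atTop.mp (hbdry δ hδ)) (n+1 : ℝ)
    have hεR : ε ≤ R := le_trans (by rw [hε]; rw [div_le_iff₀ (by positivity)]; nlinarith [Nat.cast_nonneg (α := ℝ) n]) hRge
    calc ∫⁻ r in Ioc ε (n+1 : ℝ), ENNReal.ofReal (‖g r‖^2)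
        ≤ ∫⁻ r in Ioc ε R, ENNReal.ofReal (‖g r‖^2) :=
          lintegral_mono_set (Ioc_subset_Ioc le_rfl hRge)
      _ = ENNReal.ofReal (∫ r in Ioc ε R, ‖g r‖^2) := by
          exact (ofReal_integral_eq_lintegral_ofReal (by exact (hgc.norm.pow 2).integrableOn_Ioc : IntegrableOn (fun r => ‖g r‖^2) (Ioc ε R))
            (Eventually.of_forall fun t => by positivity)).symm
      _ ≤ ENNReal.ofReal (2*δ + K) := by
          apply ENNReal.ofReal_le_ofReal
          have hcore := hardy1D_core g hg hε0 hεR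
            (hB.mono_set (fun x hx => lt_trans hε0 hx.1))
          have hmono : ∫ r in Ioc ε R, r^2*‖deriv g r‖^2 ≤ ∫ r in Ioi (0:ℝ), r^2*‖deriv g r‖^2 := by
            apply setIntegral_mono_set hB
            · filter_upwards with t using by positivity
            · filter_upwards with t ht using lt_of_lt_of_le hε0 ht.1.le
          rw [hK]; linarith
  -- put together via monotone convergence
  set f' : ℝ → ℝ≥0∞ := fun r => ENNReal.ofReal (‖g r‖^2) with hf'
  have hf'meas : Measurable f' := (hgc.norm.pow 2).measurable.ennreal_ofReal
  have hsup : ∫⁻ r in Ioi (0:ℝ), f' r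
      = ⨆ n : ℕ, ∫⁻ r in Ioc (1/(n+1) : ℝ) (n+1 : ℝ), f' r := by
    have h1 : ∀ n : ℕ, ∫⁻ r in Ioc (1/(n+1) : ℝ) (n+1 : ℝ), f' r
        = ∫⁻ r, (Ioc (1/(n+1) : ℝ) (n+1 : ℝ)).indicator f' r := by
      intro n; rw [lintegral_indicator measurableSet_Ioc]
    have h2 : ∫⁻ r in Ioi (0:ℝ), f' r = ∫⁻ r, (Ioi (0:ℝ)).indicator f' r := by
      rw [lintegral_indicator measurableSet_Ioi]
    rw [h2]
    simp_rw [h1]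
    rw [← lintegral_iSup]
    · congr 1
      funext r
      by_cases hr : r ∈ Ioi (0:ℝ)
      · rw [indicator_of_mem hr]
        apply le_antisymm
        · obtain ⟨n, hn⟩ : ∃ n : ℕ, 1/(n+1 : ℝ) < r ∧ r ≤ (n+1 : ℝ) := by
            obtain ⟨m, hm⟩ := exists_nat_gt (max (1/r) r)
            refine ⟨m, ?_, ?_⟩
            · rw [div_lt_iff₀ (by positivity)]
              have h1r : 1/r < m := lt_of_le_of_lt (le_max_left _ _) hm
              rw [div_lt_iff₀ hr] at h1r
              nlinarith [mem_Ioi.mp hr]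
            · have := lt_of_le_of_lt (le_max_right _ _) hm
              linarith
          refine le_trans ?_ (le_iSup _ n)
          show f' r ≤ (Ioc (1/(n+1) : ℝ) (n+1 : ℝ)).indicator f' r
          rw [indicator_of_mem (mem_Ioc.2 ⟨hn.1, hn.2⟩)]
        · apply iSup_le fun n => ?_
          show (Ioc (1/(n+1) : ℝ) (n+1 : ℝ)).indicator f' r ≤ f' r
          by_cases hmem : r ∈ Ioc (1/(n+1) : ℝ) (n+1 : ℝ)
          · rw [indicator_of_mem hmem]
          · rw [indicator_of_notMem hmem]; exact zero_le
      · rw [indicator_of_notMem hr]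
        refine le_antisymm zero_le (iSup_le fun n => ?_)
        have hnm : r ∉ Ioc (1/(n+1) : ℝ) (n+1 : ℝ) := fun hmem =>
          hr (mem_Ioi.2 (lt_trans (by positivity) hmem.1))
        show (Ioc (1/(n+1) : ℝ) (n+1 : ℝ)).indicator f' r ≤ 0
        rw [indicator_of_notMem hnm]
    · exact fun n => hf'meas.indicator measurableSet_Ioc
    · intro m k hmk r
      show (Ioc (1/(m+1) : ℝ) (m+1 : ℝ)).indicator f' r ≤ (Ioc (1/(k+1) : ℝ) (k+1 : ℝ)).indicator f' r
      by_cases hmem : r ∈ Ioc (1/(m+1) : ℝ) (m+1 : ℝ)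
      · rw [indicator_of_mem hmem]
        have : r ∈ Ioc (1/(k+1) : ℝ) (k+1 : ℝ) := by
          constructor
          · refine lt_of_le_of_lt ?_ hmem.1
            apply div_le_div_of_nonneg_left one_pos.le (by positivity)
            exact_mod_cast by exact_mod_cast Nat.add_le_add_right hmk 1
          · exact hmem.2.trans (by exact_mod_cast Nat.add_le_add_right hmk 1)
        rw [indicator_of_mem this]
      · rw [indicator_of_notMem hmem]; exact zero_le
  rw [hsup]
  apply ENNReal.le_of_forall_pos_le_add
  intro η hη _
  apply iSup_le fun n => ?_
  calc ∫⁻ r in Ioc (1/(n+1) : ℝ) (n+1 : ℝ), f' r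
      ≤ ENNReal.ofReal (2*((η:ℝ)/2) + K) := key ((η:ℝ)/2) (by positivity) n
    _ = ENNReal.ofReal K + η := by
        rw [show 2*((η:ℝ)/2) + K = K + (η:ℝ) by ring,
          ENNReal.ofReal_add hKnn (by positivity), ENNReal.ofReal_coe_nnreal]


lemma polar_lintegral (f : E3 → ℝ≥0∞) (hf : Measurable f) :
    ∫⁻ y, f y = ∫⁻ ω : Metric.sphere (0:E3) 1,
        (∫⁻ r in Ioi (0:ℝ), ENNReal.ofReal (r^2) * f (r • (ω : E3)))
          ∂(volume : Measure E3).toSphere := by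
  set μ : Measure E3 := volume with hμ
  have h3 : Module.finrank ℝ E3 = 3 := finrank_euclideanSpace_fin
  have step1 : ∫⁻ y, f y ∂μ = ∫⁻ y in ({0}ᶜ : Set E3), f y ∂μ := by
    rw [restrict_compl_singleton]
  have step2 : ∫⁻ y in ({0}ᶜ : Set E3), f y ∂μ
      = ∫⁻ x : (({0}ᶜ : Set E3) : Set E3), f x ∂(μ.comap Subtype.val) := by
    rw [lintegral_subtype_comap (measurableSet_singleton 0).compl]
  have hmp := μ.measurePreserving_homeomorphUnitSphereProd
  rw [h3] at hmp
  set G : Metric.sphere (0:E3) 1 × Ioi (0:ℝ) → ℝ≥0∞ :=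
    fun p => f ((p.2 : ℝ) • (p.1 : E3)) with hG
  have hGmeas : Measurable G := by
    apply hf.comp
    exact (measurable_subtype_coe.comp measurable_snd).smul
      (measurable_subtype_coe.comp measurable_fst)
  have step3 : ∫⁻ x : (({0}ᶜ : Set E3) : Set E3), f x ∂(μ.comap Subtype.val)
      = ∫⁻ p, G p ∂((μ.toSphere).prod (Measure.volumeIoiPow 2)) := by
    rw [← hmp.lintegral_comp hGmeas]
    congr 1
    funext x
    simp only [hG, ← homeomorphUnitSphereProd_symm_apply_coe, Homeomorph.symm_apply_apply]
  have step4 : ∫⁻ p, G p ∂((μ.toSphere).prod (Measure.volumeIoiPow 2))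
      = ∫⁻ ω : Metric.sphere (0:E3) 1, (∫⁻ r, G (ω, r) ∂(Measure.volumeIoiPow 2)) ∂μ.toSphere :=
    lintegral_prod G hGmeas.aemeasurable
  have step5 : ∀ ω : Metric.sphere (0:E3) 1,
      (∫⁻ r, G (ω, r) ∂(Measure.volumeIoiPow 2))
        = ∫⁻ r in Ioi (0:ℝ), ENNReal.ofReal (r^2) * f (r • (ω : E3)) := by
    intro ω
    have hmeasH : Measurable (fun r : Ioi (0:ℝ) => G (ω, r)) := by
      apply hf.comp
      show Measurable fun r : Ioi (0:ℝ) => (r : ℝ) • (ω : E3)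
      exact measurable_subtype_coe.smul measurable_const
    rw [Measure.volumeIoiPow, lintegral_withDensity_eq_lintegral_mul _
      (by exact (measurable_subtype_coe.pow_const 2).ennreal_ofReal) hmeasH]
    rw [← lintegral_subtype_comap measurableSet_Ioi
      (fun r => ENNReal.ofReal (r^2) * f (r • (ω : E3)))]
    rfl
  rw [step1, step2, step3, step4]
  exact lintegral_congr fun ω => step5 ω

lemma hardy3D (u : E3 → ℂ) (hu : Differentiable ℝ u)
    (hu2 : Integrable (fun y : E3 => ‖u y‖^2))
    (hdu : Integrable (fun y : E3 => ‖fderiv ℝ u y‖^2)) :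
    ∫⁻ y : E3, ENNReal.ofReal (‖u y‖^2 / ‖y‖^2)
      ≤ 4 * ∫⁻ y : E3, ENNReal.ofReal (‖fderiv ℝ u y‖^2) := by
  have huc : Continuous u := hu.continuous
  have hfd : Measurable (fderiv ℝ u) := measurable_fderiv ℝ u
  set f₁ : E3 → ℝ≥0∞ := fun y => ENNReal.ofReal (‖u y‖^2 / ‖y‖^2) with hf₁
  set f₂ : E3 → ℝ≥0∞ := fun y => ENNReal.ofReal (‖fderiv ℝ u y‖^2) with hf₂
  set f₃ : E3 → ℝ≥0∞ := fun y => ENNReal.ofReal (‖u y‖^2) with hf₃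
  have h1m : Measurable f₁ :=
    ((huc.norm.pow 2).measurable.div ((continuous_norm.pow 2).measurable)).ennreal_ofReal
  have h2m : Measurable f₂ := ((hfd.norm.pow_const 2)).ennreal_ofReal
  have h3m : Measurable f₃ := ((huc.norm.pow 2).measurable).ennreal_ofReal
  -- inner integrals
  set IB : Metric.sphere (0:E3) 1 → ℝ≥0∞ :=
    fun ω => ∫⁻ r in Ioi (0:ℝ), ENNReal.ofReal (r^2) * f₂ (r • (ω : E3)) with hIB
  set ID : Metric.sphere (0:E3) 1 → ℝ≥0∞ :=
    fun ω => ∫⁻ r in Ioi (0:ℝ), ENNReal.ofReal (r^2) * f₃ (r • (ω : E3)) with hID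
  have hprodmeas : ∀ (f : E3 → ℝ≥0∞), Measurable f → Measurable
      (fun p : Metric.sphere (0:E3) 1 × ℝ => ENNReal.ofReal (p.2^2) * f (p.2 • (p.1 : E3))) := by
    intro f hf
    apply Measurable.mul
    · exact ((measurable_snd.pow_const 2)).ennreal_ofReal
    · exact hf.comp (measurable_snd.smul (measurable_subtype_coe.comp measurable_fst))
  have hIBmeas : Measurable IB := (hprodmeas f₂ h2m).lintegral_prod_right'
  have hIDmeas : Measurable ID := (hprodmeas f₃ h3m).lintegral_prod_right'
  set σ : Measure (Metric.sphere (0:E3) 1) := (volume : Measure E3).toSphere with hσ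
  have hBfin : ∫⁻ (ω : Metric.sphere (0:E3) 1), IB ω ∂σ ≠ ∞ := by
    rw [← polar_lintegral f₂ h2m, ← ofReal_integral_eq_lintegral_ofReal hdu
      (Eventually.of_forall fun y => by positivity)]
    exact ENNReal.ofReal_ne_top
  have hDfin : ∫⁻ (ω : Metric.sphere (0:E3) 1), ID ω ∂σ ≠ ∞ := by
    rw [← polar_lintegral f₃ h3m, ← ofReal_integral_eq_lintegral_ofReal hu2
      (Eventually.of_forall fun y => by positivity)]
    exact ENNReal.ofReal_ne_top
  have haeB := ae_lt_top hIBmeas hBfin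
  have haeD := ae_lt_top hIDmeas hDfin
  rw [polar_lintegral f₁ h1m, polar_lintegral f₂ h2m]
  have key : ∀ᵐ (ω : Metric.sphere (0:E3) 1) ∂σ,
      (∫⁻ r in Ioi (0:ℝ), ENNReal.ofReal (r^2) * f₁ (r • (ω : E3))) ≤ 4 * IB ω := by
    filter_upwards [haeB, haeD] with ω hωB hωD
    set g : ℝ → ℂ := fun r => u (r • (ω : E3)) with hgdef
    have hω1 : ‖(ω : E3)‖ = 1 := mem_sphere_zero_iff_norm.mp ω.2
    have hg : Differentiable ℝ g := hu.comp (differentiable_id.smul_const _)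
    have hgd : ∀ r, deriv g r = fderiv ℝ u (r • (ω : E3)) (ω : E3) := by
      intro r
      have h1 : HasDerivAt (fun s : ℝ => s • (ω : E3)) ((1:ℝ) • (ω : E3)) r :=
        (hasDerivAt_id r).smul_const _
      rw [one_smul] at h1
      exact ((hu _).hasFDerivAt.comp_hasDerivAt r h1).deriv
    have hgnorm : ∀ r, ‖deriv g r‖ ≤ ‖fderiv ℝ u (r • (ω : E3))‖ := by
      intro r
      rw [hgd r]
      calc ‖fderiv ℝ u (r • (ω : E3)) (ω : E3)‖
          ≤ ‖fderiv ℝ u (r • (ω : E3))‖ * ‖(ω : E3)‖ := ContinuousLinearMap.le_opNorm _ _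
        _ = ‖fderiv ℝ u (r • (ω : E3))‖ := by rw [hω1, mul_one]
    have hptB : ∀ r : ℝ, ENNReal.ofReal (r^2 * ‖deriv g r‖^2)
        ≤ ENNReal.ofReal (r^2) * f₂ (r • (ω : E3)) := by
      intro r
      rw [hf₂, ← ENNReal.ofReal_mul (sq_nonneg r)]
      apply ENNReal.ofReal_le_ofReal
      apply mul_le_mul_of_nonneg_left _ (sq_nonneg r)
      exact pow_le_pow_left₀ (norm_nonneg _) (hgnorm r) 2
    have hBlt : ∫⁻ r in Ioi (0:ℝ), ENNReal.ofReal (r^2 * ‖deriv g r‖^2) < ∞ :=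
      lt_of_le_of_lt (lintegral_mono fun r => hptB r) hωB
    have hBω : IntegrableOn (fun r => r^2 * ‖deriv g r‖^2) (Ioi (0:ℝ)) := by
      constructor
      · exact ((measurable_id.pow_const 2).mul
          ((measurable_deriv g).norm.pow_const 2)).aestronglyMeasurable
      · rw [hasFiniteIntegral_iff_ofReal (Eventually.of_forall fun r => by positivity)]
        exact hBlt
    have hDω : IntegrableOn (fun r => r^2 * ‖g r‖^2) (Ioi (0:ℝ)) := by
      constructor
      · exact ((measurable_id.pow_const 2).mul
          ((huc.measurable.comp (measurable_id.smul
            (measurable_const : Measurable fun _ : ℝ => (ω : E3)))).norm.pow_const 2)).aestronglyMeasurable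
      · rw [hasFiniteIntegral_iff_ofReal (Eventually.of_forall fun r => by positivity)]
        refine lt_of_le_of_lt (le_of_eq (lintegral_congr fun r => ?_)) hωD
        rw [hf₃, ← ENNReal.ofReal_mul (sq_nonneg r)]
    have h1d := hardy1D g hg hBω hDω
    have hLHS : (∫⁻ r in Ioi (0:ℝ), ENNReal.ofReal (r^2) * f₁ (r • (ω : E3)))
        = ∫⁻ r in Ioi (0:ℝ), ENNReal.ofReal (‖g r‖^2) := by
      apply lintegral_congr_ae
      filter_upwards [ae_restrict_mem measurableSet_Ioi] with r hr
      have hr0 : (0:ℝ) < r := hr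
      have hnrm : ‖r • (ω : E3)‖ = r := by
        rw [norm_smul, hω1, mul_one, Real.norm_of_nonneg hr0.le]
      show ENNReal.ofReal (r^2) * ENNReal.ofReal (‖u (r • (ω:E3))‖^2 / ‖r • (ω:E3)‖^2)
        = ENNReal.ofReal (‖g r‖^2)
      rw [hnrm, ← ENNReal.ofReal_mul (sq_nonneg r)]
      congr 1
      field_simp
      rfl
    have hRHS : ENNReal.ofReal (4 * ∫ r in Ioi (0:ℝ), r^2*‖deriv g r‖^2) ≤ 4 * IB ω := by
      rw [ENNReal.ofReal_mul (by norm_num : (0:ℝ) ≤ 4),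
        ofReal_integral_eq_lintegral_ofReal hBω (Eventually.of_forall fun r => by positivity)]
      have h4 : ENNReal.ofReal (4:ℝ) = (4 : ℝ≥0∞) := by
        rw [ENNReal.ofReal_ofNat]
      rw [h4]
      exact mul_le_mul_right (lintegral_mono fun r => hptB r) 4
    rw [hLHS]
    exact le_trans h1d hRHS
  calc ∫⁻ (ω : Metric.sphere (0:E3) 1), (∫⁻ r in Ioi (0:ℝ), ENNReal.ofReal (r^2) * f₁ (r • (ω : E3))) ∂σ
      ≤ ∫⁻ (ω : Metric.sphere (0:E3) 1), 4 * IB ω ∂σ := lintegral_mono_ae key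
    _ = 4 * ∫⁻ (ω : Metric.sphere (0:E3) 1), IB ω ∂σ := lintegral_const_mul' 4 _ (by norm_num)

lemma hardy_shift (ψ : E3 → ℂ) (hψ : Differentiable ℝ ψ)
    (hψ2 : Integrable (fun y : E3 => ‖ψ y‖^2))
    (hdψ : Integrable (fun y : E3 => ‖fderiv ℝ ψ y‖^2)) (x : E3) :
    ∫⁻ y : E3, ENNReal.ofReal (‖ψ y‖^2 / ‖y - x‖^2)
      ≤ 4 * ∫⁻ y : E3, ENNReal.ofReal (‖fderiv ℝ ψ y‖^2) := by
  set u : E3 → ℂ := fun z => ψ (z + x) with hu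
  have hud : Differentiable ℝ u := hψ.comp (differentiable_id.add_const x)
  have hufderiv : ∀ z, fderiv ℝ u z = fderiv ℝ ψ (z + x) := by
    intro z
    have h1 : HasFDerivAt (fun z : E3 => z + x) (ContinuousLinearMap.id ℝ E3) z :=
      (hasFDerivAt_id z).add_const x
    have h2 := ((hψ (z+x)).hasFDerivAt.comp z h1)
    rw [ContinuousLinearMap.comp_id] at h2
    exact h2.fderiv
  have hu2 : Integrable (fun z : E3 => ‖u z‖^2) := hψ2.comp_add_right x
  have hdu : Integrable (fun z : E3 => ‖fderiv ℝ u z‖^2) := by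
    apply (hdψ.comp_add_right x).congr
    filter_upwards with z
    rw [hufderiv z]
  have htrans : ∫⁻ y : E3, ENNReal.ofReal (‖ψ y‖^2 / ‖y - x‖^2)
      = ∫⁻ z : E3, ENNReal.ofReal (‖u z‖^2 / ‖z‖^2) := by
    rw [← lintegral_add_right_eq_self
      (fun y : E3 => ENNReal.ofReal (‖ψ y‖^2 / ‖y - x‖^2)) x]
    congr 1
    funext z
    rw [add_sub_cancel_right]
  have htrans2 : ∫⁻ z : E3, ENNReal.ofReal (‖fderiv ℝ u z‖^2)
      = ∫⁻ y : E3, ENNReal.ofReal (‖fderiv ℝ ψ y‖^2) := by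
    rw [← lintegral_add_right_eq_self
      (fun y : E3 => ENNReal.ofReal (‖fderiv ℝ ψ y‖^2)) x]
    congr 1
    funext z
    rw [hufderiv z]
  rw [htrans, ← htrans2]
  exact hardy3D u hud hu2 hdu





set_option maxHeartbeats 1600000 in
lemma corrKdot_main_aux (C₀ N : ℝ) (w : E3 → ℝ) (φ ψ : E3 → ℂ) (Mφ Mψ : ℝ)
    (hC₀ : 0 < C₀) (hN : 1 ≤ N) (hw : Measurable w) (hw0 : ∀ x, 0 ≤ w x)
    (hwle : ∀ x, w x ≤ min 1 (C₀ / (1 + ‖x‖)))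
    (hφd : Differentiable ℝ φ)
    (hφ2 : Integrable (fun x : E3 => ‖φ x‖ ^ 2))
    (hdφ : Integrable (fun x : E3 => ‖fderiv ℝ φ x‖ ^ 2))
    (hψd : Differentiable ℝ ψ)
    (hψ2 : Integrable (fun x : E3 => ‖ψ x‖ ^ 2))
    (hdψ : Integrable (fun x : E3 => ‖fderiv ℝ ψ x‖ ^ 2))
    (hMφ : ∀ x, ‖φ x‖ ≤ Mφ) (hMψ : ∀ x, ‖ψ x‖ ≤ Mψ) (x : E3) :
    (∫ y : E3, ‖corrKdot N w φ ψ y x‖ ^ 2) ^ ((1 : ℝ) / 2)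
      ≤ 3 * C₀ * (Mφ * l2grad ψ + Mψ * l2grad φ) := by
  have hMφ0 : 0 ≤ Mφ := le_trans (norm_nonneg _) (hMφ 0)
  have hMψ0 : 0 ≤ Mψ := le_trans (norm_nonneg _) (hMψ 0)
  have hN0 : 0 < N := lt_of_lt_of_le one_pos hN
  set Bφ : ℝ := ∫ y : E3, ‖fderiv ℝ φ y‖ ^ 2 with hBφ
  set Bψ : ℝ := ∫ y : E3, ‖fderiv ℝ ψ y‖ ^ 2 with hBψ
  have hBφ0 : 0 ≤ Bφ := integral_nonneg fun y => by positivity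
  have hBψ0 : 0 ≤ Bψ := integral_nonneg fun y => by positivity
  set L : E3 → ℂ := fun y => corrKdot N w φ ψ y x with hLdef
  have hLmeas : Measurable L := by
    apply Measurable.mul
    · apply Measurable.neg
      apply Complex.measurable_ofReal.comp
      exact (measurable_const.mul (hw.comp
        ((measurable_id.sub measurable_const).const_smul N)))
    · exact ((hψd.continuous.measurable.mul measurable_const).add
        (hφd.continuous.measurable.mul measurable_const))
  have h1 : (∫ y : E3, ‖L y‖ ^ 2) = (∫⁻ y : E3, ENNReal.ofReal (‖L y‖ ^ 2)).toReal := by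
    rw [integral_eq_lintegral_of_nonneg_ae (Eventually.of_forall fun y => by positivity)
      ((hLmeas.norm.pow_const 2).aestronglyMeasurable)]
  -- pointwise bound
  have hxc : ∀ᵐ y : E3, y ≠ x := by
    rw [ae_iff]
    have hset : {y : E3 | ¬ y ≠ x} = {x} := by ext y; simp
    rw [hset]
    exact measure_singleton x
  have hptw : ∀ᵐ y : E3, ENNReal.ofReal (‖L y‖ ^ 2)
      ≤ ENNReal.ofReal (2*C₀^2*Mφ^2) * ENNReal.ofReal (‖ψ y‖^2 / ‖y - x‖^2)
        + ENNReal.ofReal (2*C₀^2*Mψ^2) * ENNReal.ofReal (‖φ y‖^2 / ‖y - x‖^2) := by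
    filter_upwards [hxc] with y hyx
    have hz0 : (0:ℝ) < ‖y - x‖ := by rwa [norm_pos_iff, sub_ne_zero]
    have hwB : N * w (N • (y - x)) ≤ C₀ / ‖y - x‖ := by
      have hb1 : w (N • (y - x)) ≤ C₀ / (1 + ‖N • (y - x)‖) :=
        le_trans (hwle _) (min_le_right _ _)
      have hb2 : ‖N • (y - x)‖ = N * ‖y - x‖ := by
        rw [norm_smul, Real.norm_of_nonneg hN0.le]
      rw [hb2] at hb1
      calc N * w (N • (y - x)) ≤ N * (C₀ / (1 + N * ‖y - x‖)) :=
            mul_le_mul_of_nonneg_left hb1 hN0.le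
        _ ≤ N * (C₀ / (N * ‖y - x‖)) := by
            apply mul_le_mul_of_nonneg_left _ hN0.le
            apply (div_le_div_iff_of_pos_left hC₀ (by positivity) (by positivity)).mpr
            linarith
        _ = C₀ / ‖y - x‖ := by field_simp
    have hw0' : 0 ≤ N * w (N • (y - x)) := mul_nonneg hN0.le (hw0 _)
    have hnormL : ‖L y‖ ≤ (C₀ / ‖y - x‖) * (Mφ * ‖ψ y‖ + Mψ * ‖φ y‖) := by
      have hexp : ‖L y‖ = (N * w (N • (y - x))) * ‖ψ y * φ x + φ y * ψ x‖ := by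
        show ‖-(Complex.ofReal (N * w (N • (y - x)))) * (ψ y * φ x + φ y * ψ x)‖ = _
        rw [norm_mul, norm_neg, Complex.norm_real, Real.norm_of_nonneg hw0']
      have hsum : ‖ψ y * φ x + φ y * ψ x‖ ≤ Mφ * ‖ψ y‖ + Mψ * ‖φ y‖ := by
        calc ‖ψ y * φ x + φ y * ψ x‖ ≤ ‖ψ y * φ x‖ + ‖φ y * ψ x‖ := norm_add_le _ _
          _ = ‖ψ y‖ * ‖φ x‖ + ‖φ y‖ * ‖ψ x‖ := by rw [norm_mul, norm_mul]
          _ ≤ Mφ * ‖ψ y‖ + Mψ * ‖φ y‖ := by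
              have := hMφ x; have := hMψ x
              have := norm_nonneg (ψ y); have := norm_nonneg (φ y)
              nlinarith
      rw [hexp]
      apply mul_le_mul hwB hsum (norm_nonneg _) (by positivity)
    have hsq : ‖L y‖ ^ 2 ≤ 2*C₀^2*Mφ^2*(‖ψ y‖^2 / ‖y - x‖^2)
        + 2*C₀^2*Mψ^2*(‖φ y‖^2 / ‖y - x‖^2) := by
      have hsq1 : ‖L y‖ ^ 2 ≤ ((C₀ / ‖y - x‖) * (Mφ * ‖ψ y‖ + Mψ * ‖φ y‖)) ^ 2 :=
        pow_le_pow_left₀ (norm_nonneg _) hnormL 2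
      have hsq2 : (Mφ * ‖ψ y‖ + Mψ * ‖φ y‖) ^ 2
          ≤ 2*(Mφ^2*‖ψ y‖^2) + 2*(Mψ^2*‖φ y‖^2) := by
        nlinarith [sq_nonneg (Mφ * ‖ψ y‖ - Mψ * ‖φ y‖)]
      calc ‖L y‖ ^ 2 ≤ ((C₀ / ‖y - x‖) * (Mφ * ‖ψ y‖ + Mψ * ‖φ y‖)) ^ 2 := hsq1
        _ = (C₀^2 / ‖y - x‖^2) * (Mφ * ‖ψ y‖ + Mψ * ‖φ y‖) ^ 2 := by
            rw [mul_pow, div_pow]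
        _ ≤ (C₀^2 / ‖y - x‖^2) * (2*(Mφ^2*‖ψ y‖^2) + 2*(Mψ^2*‖φ y‖^2)) :=
            mul_le_mul_of_nonneg_left hsq2 (by positivity)
        _ = 2*C₀^2*Mφ^2*(‖ψ y‖^2 / ‖y - x‖^2) + 2*C₀^2*Mψ^2*(‖φ y‖^2 / ‖y - x‖^2) := by
            field_simp
    calc ENNReal.ofReal (‖L y‖ ^ 2)
        ≤ ENNReal.ofReal (2*C₀^2*Mφ^2*(‖ψ y‖^2 / ‖y - x‖^2)
            + 2*C₀^2*Mψ^2*(‖φ y‖^2 / ‖y - x‖^2)) := ENNReal.ofReal_le_ofReal hsq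
      _ = ENNReal.ofReal (2*C₀^2*Mφ^2) * ENNReal.ofReal (‖ψ y‖^2 / ‖y - x‖^2)
          + ENNReal.ofReal (2*C₀^2*Mψ^2) * ENNReal.ofReal (‖φ y‖^2 / ‖y - x‖^2) := by
          rw [ENNReal.ofReal_add (by positivity) (by positivity),
            ENNReal.ofReal_mul (p := 2*C₀^2*Mφ^2) (by positivity),
            ENNReal.ofReal_mul (p := 2*C₀^2*Mψ^2) (by positivity)]
  -- integrate the bound
  have hψm : Measurable (fun y : E3 => ENNReal.ofReal (‖ψ y‖^2 / ‖y - x‖^2)) := by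
    apply Measurable.ennreal_ofReal
    exact ((hψd.continuous.norm.pow 2).measurable.div
      (((continuous_id.sub continuous_const).norm.pow 2).measurable))
  have hφm : Measurable (fun y : E3 => ENNReal.ofReal (‖φ y‖^2 / ‖y - x‖^2)) := by
    apply Measurable.ennreal_ofReal
    exact ((hφd.continuous.norm.pow 2).measurable.div
      (((continuous_id.sub continuous_const).norm.pow 2).measurable))
  have hint : ∫⁻ y : E3, ENNReal.ofReal (‖L y‖ ^ 2)
      ≤ ENNReal.ofReal (8*C₀^2*Mφ^2*Bψ + 8*C₀^2*Mψ^2*Bφ) := by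
    have h4 : (4 : ℝ≥0∞) = ENNReal.ofReal (4:ℝ) := by rw [ENNReal.ofReal_ofNat]
    calc ∫⁻ y : E3, ENNReal.ofReal (‖L y‖ ^ 2)
        ≤ ∫⁻ y : E3, (ENNReal.ofReal (2*C₀^2*Mφ^2) * ENNReal.ofReal (‖ψ y‖^2 / ‖y - x‖^2)
            + ENNReal.ofReal (2*C₀^2*Mψ^2) * ENNReal.ofReal (‖φ y‖^2 / ‖y - x‖^2)) :=
          lintegral_mono_ae hptw
      _ = ENNReal.ofReal (2*C₀^2*Mφ^2) * (∫⁻ y : E3, ENNReal.ofReal (‖ψ y‖^2 / ‖y - x‖^2))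
          + ENNReal.ofReal (2*C₀^2*Mψ^2) * (∫⁻ y : E3, ENNReal.ofReal (‖φ y‖^2 / ‖y - x‖^2)) := by
          rw [lintegral_add_left (hψm.const_mul _), lintegral_const_mul' _ _ ENNReal.ofReal_ne_top,
            lintegral_const_mul' _ _ ENNReal.ofReal_ne_top]
      _ ≤ ENNReal.ofReal (2*C₀^2*Mφ^2) * (4 * (∫⁻ y : E3, ENNReal.ofReal (‖fderiv ℝ ψ y‖^2)))
          + ENNReal.ofReal (2*C₀^2*Mψ^2) * (4 * (∫⁻ y : E3, ENNReal.ofReal (‖fderiv ℝ φ y‖^2))) := by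
          apply add_le_add
          · exact mul_le_mul_right (hardy_shift ψ hψd hψ2 hdψ x) _
          · exact mul_le_mul_right (hardy_shift φ hφd hφ2 hdφ x) _
      _ = ENNReal.ofReal (8*C₀^2*Mφ^2*Bψ + 8*C₀^2*Mψ^2*Bφ) := by
          rw [← ofReal_integral_eq_lintegral_ofReal hdψ (Eventually.of_forall fun y => by positivity),
            ← ofReal_integral_eq_lintegral_ofReal hdφ (Eventually.of_forall fun y => by positivity),
            ← hBψ, ← hBφ, h4, ← ENNReal.ofReal_mul (by norm_num),
            ← ENNReal.ofReal_mul (by positivity), ← ENNReal.ofReal_mul (by norm_num),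
            ← ENNReal.ofReal_mul (by positivity),
            ← ENNReal.ofReal_add (by positivity) (by positivity)]
          congr 1
          ring
  have hto : (∫⁻ y : E3, ENNReal.ofReal (‖L y‖ ^ 2)).toReal
      ≤ 8*C₀^2*Mφ^2*Bψ + 8*C₀^2*Mψ^2*Bφ := by
    refine le_trans (ENNReal.toReal_mono ENNReal.ofReal_ne_top hint) ?_
    rw [ENNReal.toReal_ofReal (by positivity)]
  -- final computation with square roots
  have hgoal : (∫ y : E3, ‖L y‖ ^ 2) ^ ((1:ℝ)/2)
      ≤ 3 * C₀ * (Mφ * l2grad ψ + Mψ * l2grad φ) := by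
    rw [h1, ← Real.sqrt_eq_rpow]
    have hl2ψ : l2grad ψ = Real.sqrt Bψ := by
      rw [l2grad, ← Real.sqrt_eq_rpow, hBψ]
    have hl2φ : l2grad φ = Real.sqrt Bφ := by
      rw [l2grad, ← Real.sqrt_eq_rpow, hBφ]
    rw [hl2ψ, hl2φ]
    set sψ := Real.sqrt Bψ with hsψ
    set sφ := Real.sqrt Bφ with hsφ
    have hsψ0 : 0 ≤ sψ := Real.sqrt_nonneg _
    have hsφ0 : 0 ≤ sφ := Real.sqrt_nonneg _
    have hsψ2 : sψ^2 = Bψ := Real.sq_sqrt hBψ0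
    have hsφ2 : sφ^2 = Bφ := Real.sq_sqrt hBφ0
    have hkey : 8*C₀^2*Mφ^2*Bψ + 8*C₀^2*Mψ^2*Bφ ≤ (3 * C₀ * (Mφ * sψ + Mψ * sφ))^2 := by
      rw [← hsψ2, ← hsφ2]
      have e1 : 0 ≤ C₀^2*((Mφ*sψ)*(Mψ*sφ)) := mul_nonneg (sq_nonneg C₀)
        (mul_nonneg (mul_nonneg hMφ0 hsψ0) (mul_nonneg hMψ0 hsφ0))
      have e2 : 0 ≤ C₀^2*(Mφ*sψ)^2 := mul_nonneg (sq_nonneg C₀) (sq_nonneg _)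
      have e3 : 0 ≤ C₀^2*(Mψ*sφ)^2 := mul_nonneg (sq_nonneg C₀) (sq_nonneg _)
      nlinarith [e1, e2, e3]
    calc Real.sqrt ((∫⁻ y : E3, ENNReal.ofReal (‖L y‖ ^ 2)).toReal)
        ≤ Real.sqrt ((3 * C₀ * (Mφ * sψ + Mψ * sφ))^2) :=
          Real.sqrt_le_sqrt (le_trans hto hkey)
      _ = 3 * C₀ * (Mφ * sψ + Mψ * sφ) := Real.sqrt_sq (mul_nonneg
          (mul_nonneg (by norm_num) hC₀.le)
          (add_nonneg (mul_nonneg hMφ0 hsψ0) (mul_nonneg hMψ0 hsφ0)))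
  exact hgoal


/-- If moreover `‖φ‖_{L^∞}, ‖ψ‖_{L^∞} < ∞` (encoded by arbitrary pointwise
bounds `Mφ`, `Mψ`), then `sup_x ‖ℓ(·,x)‖_{L²} ≤ C C₀ (‖φ‖_{L^∞} ‖∇ψ‖_{L²} + ‖ψ‖_{L^∞} ‖∇φ‖_{L²})`
for a universal constant `C`. -/
theorem corrKdot_sup_L2_bound :
    ∃ C : ℝ, 0 < C ∧
      ∀ (C₀ N : ℝ) (w : E3 → ℝ) (φ ψ : E3 → ℂ) (Mφ Mψ : ℝ),
        0 < C₀ → 1 ≤ N →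
        Measurable w →
        (∀ x, 0 ≤ w x) →
        (∀ x, w x ≤ min 1 (C₀ / (1 + ‖x‖))) →
        Differentiable ℝ φ →
        Integrable (fun x : E3 => ‖φ x‖ ^ 2) →
        Integrable (fun x : E3 => ‖fderiv ℝ φ x‖ ^ 2) →
        Differentiable ℝ ψ →
        Integrable (fun x : E3 => ‖ψ x‖ ^ 2) →
        Integrable (fun x : E3 => ‖fderiv ℝ ψ x‖ ^ 2) →
        (∀ x, ‖φ x‖ ≤ Mφ) →
        (∀ x, ‖ψ x‖ ≤ Mψ) →
        ∀ x : E3,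
          (∫ y : E3, ‖corrKdot N w φ ψ y x‖ ^ 2) ^ ((1 : ℝ) / 2)
            ≤ C * C₀ * (Mφ * l2grad ψ + Mψ * l2grad φ) := by
  refine ⟨3, by norm_num, ?_⟩
  intro C₀ N w φ ψ Mφ Mψ hC₀ hN hw hw0 hwle hφd hφ2 hdφ hψd hψ2 hdψ hMφ hMψ x
  exact corrKdot_main_aux C₀ N w φ ψ Mφ Mψ hC₀ hN hw hw0 hwle hφd hφ2 hdφ hψd hψ2 hdψ hMφ hMψ x
end
end
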